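/- arXiv:2210.07567 — 6 statements merged into one kernel-verified Lean document; each statement's English description precedes it below -/
import Mathlib

section
/- Let d be a Dyck path on an n×n board with bounce number t. Then every chain in the natural unit interval order P(d) contains at most one element from each of the consecutive intervals determined by the bounce sequence, and hence has at most t elements. Consequently, for any partition μ of n, if a P(d)-tableau of shape μ exists (equivalently, B_μ(q) ≠ 0), then the largest part of μ satisfies μ_1 ≤ t. -/
open scoped Classical

/-- A Dyck path on an `n × n` board: a weakly increasing sequence
`d 1 ≤ d 2 ≤ ⋯ ≤ d (n-1) ≤ n` with `i ≤ d i`; we record it on indices `1, …, n`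
with the harmless boundary convention `d n = n`. -/
structure DyckPath (n : ℕ) where
  d : ℕ → ℕ
  mono : ∀ i j : ℕ, 1 ≤ i → i ≤ j → j ≤ n → d i ≤ d j
  le_n : ∀ i : ℕ, 1 ≤ i → i ≤ n → d i ≤ n
  ge_self : ∀ i : ℕ, 1 ≤ i → i ≤ n → i ≤ d i
  top : d n = n

/-- The shape `3^l 2^j 1^m`, as a list of row lengths. -/
def shape (l j m : ℕ) : List ℕ :=
  List.replicate l 3 ++ List.replicate j 2 ++ List.replicate m 1

/-- Position in the row-by-row reading word where row `i` (0-indexed) starts. -/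
def rowStart (μ : List ℕ) (i : ℕ) : ℕ := (μ.take i).sum

/-- The entry in row `i`, column `j` (both 0-indexed) of the tableau of shape `μ`
whose row-by-row reading word is `L`. -/
def entry (μ L : List ℕ) (i j : ℕ) : ℕ := L.getD (rowStart μ i + j) 0

/-- The cells (row, column), 0-indexed, of the Young diagram with row lengths `μ`. -/
def cellsOf (μ : List ℕ) : Finset (ℕ × ℕ) :=
  (Finset.range μ.length ×ˢ Finset.range (μ.foldr max 0)).filter fun c =>
    c.2 < μ.getD c.1 0

namespace DyckPath

variable {n : ℕ}

/-- The natural unit interval order `P(d)`: `i ≺ j ↔ i < n ∧ j > d i`. -/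
def prec (D : DyckPath n) (i j : ℕ) : Prop := i < n ∧ D.d i < j

/-- Incomparability in `P(d)`. -/
def Incomp (D : DyckPath n) (x y : ℕ) : Prop := ¬ D.prec x y ∧ ¬ D.prec y x

/-- The bounce sequence `m 0 = d 1`, `m (k+1) = d (m k + 1)`. -/
def bounce (D : DyckPath n) : ℕ → ℕ
  | 0 => D.d 1
  | k + 1 => D.d (D.bounce k + 1)

def m0 (D : DyckPath n) : ℕ := D.bounce 0

def m1 (D : DyckPath n) : ℕ := D.bounce 1

/-- `d` has bounce number three: `m 2 = n` is the first bounce term equal to `n`. -/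
def BounceThree (D : DyckPath n) : Prop := D.m0 < n ∧ D.m1 < n ∧ D.bounce 2 = n

/-- `L` is the row-by-row reading word of a `P`-tableau of shape `μ`:
`L` uses each of `1, …, n` exactly once, rows strictly increase in `≺`, and for
vertically adjacent cells the lower entry is not `≺` the upper one. -/
def IsPTab (D : DyckPath n) (μ L : List ℕ) : Prop :=
  L.Perm (List.map (· + 1) (List.range n)) ∧ μ.sum = n ∧
  (∀ i j : ℕ, i < μ.length → j + 1 < μ.getD i 0 →
    D.prec (entry μ L i j) (entry μ L i (j + 1))) ∧
  (∀ i j : ℕ, i + 1 < μ.length → j < μ.getD (i + 1) 0 →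
    ¬ D.prec (entry μ L (i + 1) j) (entry μ L i j))

/-- The number of inversions of a `P`-tableau: pairs of entries `x > y`,
incomparable in `P`, with `x` in a strictly higher row than `y`. -/
noncomputable def invNum (D : DyckPath n) (μ L : List ℕ) : ℕ :=
  ((cellsOf μ ×ˢ cellsOf μ).filter fun pq =>
    pq.1.1 < pq.2.1 ∧ entry μ L pq.2.1 pq.2.2 < entry μ L pq.1.1 pq.1.2 ∧
      D.Incomp (entry μ L pq.1.1 pq.1.2) (entry μ L pq.2.1 pq.2.2)).card

/-- The finite set of (reading words of) `P`-tableaux of shape `μ`. -/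
noncomputable def ptabs (D : DyckPath n) (μ : List ℕ) : Finset (List ℕ) :=
  ((List.map (· + 1) (List.range n)).permutations.toFinset).filter fun L => D.IsPTab μ L

/-- `B_μ(q) = Σ_T q^{inv T}` over all `P`-tableaux `T` of shape `μ`, as a polynomial in `ℤ[q]`. -/
noncomputable def B (D : DyckPath n) (μ : List ℕ) : Polynomial ℤ :=
  ∑ L ∈ D.ptabs μ, Polynomial.X ^ D.invNum μ L

end DyckPath

/-- The `k`-th interval determined by the bounce sequence:
`{1,…,m₀}` for `k = 0` and `{m_{k-1}+1, …, m_k}` for `k ≥ 1`. -/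
def DyckPath.interval {n : ℕ} (D : DyckPath n) (k : ℕ) : Finset ℕ :=
  if k = 0 then Finset.Icc 1 (D.bounce 0) else Finset.Icc (D.bounce (k - 1) + 1) (D.bounce k)

lemma DyckPath.not_prec_of_mem_interval {n t : ℕ} (D : DyckPath n)
    (hbt : D.bounce (t - 1) = n) (hlt : ∀ i : ℕ, i + 1 < t → D.bounce i < n)
    {k x y : ℕ} (hk : k < t) (hx : x ∈ D.interval k) (hy : y ∈ D.interval k) :
    ¬ D.prec x y := by
  have hbn : D.bounce k ≤ n := by
    rcases Nat.lt_or_ge (k + 1) t with h | h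
    · exact le_of_lt (hlt k h)
    · have hk1 : k = t - 1 := by omega
      rw [hk1, hbt]
  rintro ⟨hxn, hdx⟩
  cases k with
  | zero =>
    have hx' : x ∈ Finset.Icc 1 (D.bounce 0) := by simpa [DyckPath.interval] using hx
    have hy' : y ∈ Finset.Icc 1 (D.bounce 0) := by simpa [DyckPath.interval] using hy
    rw [Finset.mem_Icc] at hx' hy'
    have hm : D.d 1 ≤ D.d x := D.mono 1 x le_rfl hx'.1 (le_trans hx'.2 hbn)
    have : D.bounce 0 = D.d 1 := rfl
    omega
  | succ j =>
    have hx' : x ∈ Finset.Icc (D.bounce j + 1) (D.bounce (j + 1)) := by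
      simpa [DyckPath.interval] using hx
    have hy' : y ∈ Finset.Icc (D.bounce j + 1) (D.bounce (j + 1)) := by
      simpa [DyckPath.interval] using hy
    rw [Finset.mem_Icc] at hx' hy'
    have hm : D.d (D.bounce j + 1) ≤ D.d x :=
      D.mono (D.bounce j + 1) x (Nat.succ_le_succ (Nat.zero_le _)) hx'.1
        (le_trans hx'.2 hbn)
    have : D.bounce (j + 1) = D.d (D.bounce j + 1) := rfl
    omega

lemma DyckPath.mem_interval_exists {n t : ℕ} (D : DyckPath n) (ht : 0 < t)
    (hbt : D.bounce (t - 1) = n) {x : ℕ} (hx1 : 1 ≤ x) (hxn : x ≤ n) :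
    ∃ k < t, x ∈ D.interval k := by
  have hex : ∃ k, x ≤ D.bounce k := ⟨t - 1, by omega⟩
  have hkx : x ≤ D.bounce (Nat.find hex) := Nat.find_spec hex
  have hkle : Nat.find hex ≤ t - 1 := Nat.find_le (by omega)
  refine ⟨Nat.find hex, by omega, ?_⟩
  cases hk' : Nat.find hex with
  | zero =>
    rw [hk'] at hkx
    have hiv : D.interval 0 = Finset.Icc 1 (D.bounce 0) := if_pos rfl
    rw [hiv, Finset.mem_Icc]
    exact ⟨hx1, hkx⟩
  | succ j =>
    rw [hk'] at hkx
    have hmin : ¬ x ≤ D.bounce j := Nat.find_min hex (by omega)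
    have hiv : D.interval (j + 1) = Finset.Icc (D.bounce j + 1) (D.bounce (j + 1)) := by
      simp [DyckPath.interval]
    rw [hiv, Finset.mem_Icc]
    omega

/-- For a Dyck path of bounce number `t`, every chain of `P(d)` meets each
bounce interval in at most one element, hence has at most `t` elements; consequently any
partition `μ` admitting a `P(d)`-tableau has largest part `μ₁ ≤ t`. -/
theorem chain_card_le_bounceNumber_and_ptab_first_part_le
    (n t : ℕ) (D : DyckPath n) (ht : 0 < t)
    (hbt : D.bounce (t - 1) = n) (hlt : ∀ i : ℕ, i + 1 < t → D.bounce i < n) :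
    (∀ C : Finset ℕ, (∀ x ∈ C, 1 ≤ x ∧ x ≤ n) →
      (∀ x ∈ C, ∀ y ∈ C, x ≠ y → D.prec x y ∨ D.prec y x) →
      (∀ k : ℕ, k < t → (C.filter fun x => x ∈ D.interval k).card ≤ 1) ∧ C.card ≤ t) ∧
    (∀ μ L : List ℕ, μ.Pairwise (· ≥ ·) → (∀ x ∈ μ, 0 < x) → D.IsPTab μ L →
      μ.headD 0 ≤ t) := by
  have hpart1 : ∀ C : Finset ℕ, (∀ x ∈ C, 1 ≤ x ∧ x ≤ n) →
      (∀ x ∈ C, ∀ y ∈ C, x ≠ y → D.prec x y ∨ D.prec y x) →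
      (∀ k : ℕ, k < t → (C.filter fun x => x ∈ D.interval k).card ≤ 1) ∧ C.card ≤ t := by
    intro C hbound hchain
    have hfilter : ∀ k, k < t → (C.filter fun x => x ∈ D.interval k).card ≤ 1 := by
      intro k hk
      rw [Finset.card_le_one]
      intro a ha b hb
      simp only [Finset.mem_filter] at ha hb
      by_contra hne
      rcases hchain a ha.1 b hb.1 hne with h | h
      · exact D.not_prec_of_mem_interval hbt hlt hk ha.2 hb.2 h
      · exact D.not_prec_of_mem_interval hbt hlt hk hb.2 ha.2 h
    refine ⟨hfilter, ?_⟩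
    have hsub : C ⊆ (Finset.range t).biUnion fun k => C.filter fun x => x ∈ D.interval k := by
      intro x hxC
      obtain ⟨k, hk, hmem⟩ := D.mem_interval_exists ht hbt (hbound x hxC).1 (hbound x hxC).2
      exact Finset.mem_biUnion.2 ⟨k, Finset.mem_range.2 hk, Finset.mem_filter.2 ⟨hxC, hmem⟩⟩
    calc C.card ≤ _ := Finset.card_le_card hsub
      _ ≤ ∑ k ∈ Finset.range t, (C.filter fun x => x ∈ D.interval k).card :=
          Finset.card_biUnion_le
      _ ≤ ∑ k ∈ Finset.range t, 1 :=
          Finset.sum_le_sum fun k hk => hfilter k (Finset.mem_range.1 hk)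
      _ = t := by simp
  refine ⟨hpart1, ?_⟩
  intro μ L hsort hpos hptab
  cases μ with
  | nil => exact Nat.zero_le t
  | cons h rest =>
    obtain ⟨hperm, hsum, hrow, _⟩ := hptab
    have hLlen : L.length = n := by simpa using hperm.length_eq
    have hh_le : h ≤ n := by
      have : h + rest.sum = n := by simpa using hsum
      omega
    have hmem : ∀ j, j < n → 1 ≤ L.getD j 0 ∧ L.getD j 0 ≤ n := by
      intro j hj
      have hjL : j < L.length := by omega
      have hLj : L.getD j 0 ∈ L := by
        rw [List.getD_eq_getElem L 0 hjL]; exact List.getElem_mem hjL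
      have := hperm.mem_iff.1 hLj
      simp only [List.mem_map, List.mem_range] at this
      obtain ⟨a, ha, hax⟩ := this
      omega
    have hadj : ∀ j, j + 1 < h → D.prec (L.getD j 0) (L.getD (j + 1) 0) := by
      intro j hj
      have := hrow 0 j (by simp) (by simpa using hj)
      simpa [entry, rowStart] using this
    have hchain : ∀ j2, j2 < h → ∀ j1, j1 < j2 → D.prec (L.getD j1 0) (L.getD j2 0) := by
      intro j2
      induction j2 with
      | zero => omega
      | succ j ih =>
        intro hj2 j1 hj1
        rcases Nat.lt_succ_iff_lt_or_eq.1 hj1 with h' | h'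
        · have p1 := ih (by omega) j1 h'
          have p2 := hadj j hj2
          have hb := hmem j (by omega)
          have hg := D.ge_self (L.getD j 0) hb.1 hb.2
          exact ⟨p1.1, by have := p1.2; have := p2.2; omega⟩
        · subst h'; exact hadj j1 hj2
    have hmono : ∀ j1 j2, j1 < j2 → j2 < h → L.getD j1 0 < L.getD j2 0 := by
      intro j1 j2 h12 h2
      have p := hchain j2 h2 j1 h12
      have hb := hmem j1 (by omega)
      have := D.ge_self (L.getD j1 0) hb.1 hb.2
      have := p.2
      omega
    set f : ℕ → ℕ := fun j => L.getD j 0 with hf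
    have hcard : ((Finset.range h).image f).card = h := by
      rw [Finset.card_image_of_injOn, Finset.card_range]
      intro a ha b hb hab
      simp only [Finset.coe_range, Set.mem_Iio] at ha hb
      by_contra hne
      rcases Nat.lt_or_ge a b with h' | h'
      · exact absurd hab (Nat.ne_of_lt (hmono a b h' hb))
      · exact absurd hab.symm (Nat.ne_of_lt (hmono b a (by omega) ha))
    have hbound : ∀ x ∈ (Finset.range h).image f, 1 ≤ x ∧ x ≤ n := by
      intro x hx
      obtain ⟨j, hj, rfl⟩ := Finset.mem_image.1 hx
      exact hmem j (by have := Finset.mem_range.1 hj; omega)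
    have hcomp : ∀ x ∈ (Finset.range h).image f, ∀ y ∈ (Finset.range h).image f,
        x ≠ y → D.prec x y ∨ D.prec y x := by
      intro x hx y hy hne
      obtain ⟨j1, hj1, rfl⟩ := Finset.mem_image.1 hx
      obtain ⟨j2, hj2, rfl⟩ := Finset.mem_image.1 hy
      rw [Finset.mem_range] at hj1 hj2
      rcases Nat.lt_trichotomy j1 j2 with h' | h' | h'
      · exact Or.inl (hchain j2 hj2 j1 h')
      · exact absurd (by rw [h']) hne
      · exact Or.inr (hchain j1 hj1 j2 h')
    have := (hpart1 _ hbound hcomp).2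
    rw [hcard] at this
    simpa using this
end

section
/- Let P = P(d) be the natural unit interval order on {1,…,n} of a Dyck path d with bounce number 3, and let l, j be nonnegative integers with 3l + 2j ≤ n. If a P-tableau of shape 3^l 2^j 1^{n-3l-2j} exists (equivalently, B_{3^l 2^j 1^{n-3l-2j}}(q) ≠ 0), then 2l + j ≤ k, where k = a + b. -/
open scoped Classical

section Aux

lemma rowStart_succ (μ : List ℕ) (i : ℕ) (hi : i < μ.length) :
    rowStart μ (i + 1) = rowStart μ i + μ.getD i 0 := by
  unfold rowStart
  rw [List.sum_take_succ μ i hi, List.getD_eq_getElem?_getD, List.getElem?_eq_getElem hi]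
  rfl

lemma rowStart_mono (μ : List ℕ) {i i' : ℕ} (h : i ≤ i') :
    rowStart μ i ≤ rowStart μ i' := by
  unfold rowStart
  conv_rhs => rw [← List.take_append_drop i (μ.take i')]
  rw [List.sum_append, List.take_take, min_eq_left h]
  exact Nat.le_add_right _ _

lemma rowStart_length (μ : List ℕ) : rowStart μ μ.length = μ.sum := by
  simp [rowStart]

lemma idx_lt_sum (μ : List ℕ) {i c : ℕ} (hi : i < μ.length) (hc : c < μ.getD i 0) :
    rowStart μ i + c < μ.sum := by
  have h1 : rowStart μ i + c < rowStart μ (i + 1) := by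
    rw [rowStart_succ μ i hi]; omega
  have h2 : rowStart μ (i + 1) ≤ rowStart μ μ.length := rowStart_mono μ hi
  rw [rowStart_length] at h2; omega

lemma idx_inj (μ : List ℕ) {i c i' c' : ℕ} (hi : i < μ.length) (hc : c < μ.getD i 0)
    (hi' : i' < μ.length) (hc' : c' < μ.getD i' 0)
    (h : rowStart μ i + c = rowStart μ i' + c') : i = i' ∧ c = c' := by
  have key : ∀ a b ca, a < μ.length → ca < μ.getD a 0 → a < b →
      rowStart μ a + ca < rowStart μ b := by
    intro a b ca ha hca hab
    have h1 : rowStart μ a + ca < rowStart μ (a + 1) := by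
      rw [rowStart_succ μ a ha]; omega
    have h2 : rowStart μ (a + 1) ≤ rowStart μ b := rowStart_mono μ hab
    omega
  rcases lt_trichotomy i i' with hlt | heq | hgt
  · have := key i i' c hi hc hlt
    have := rowStart_mono μ (le_refl i')
    omega
  · subst heq; omega
  · have := key i' i c' hi' hc' hgt
    omega

lemma shape_length (l j m : ℕ) : (shape l j m).length = l + j + m := by
  simp [shape]; ring

lemma shape_sum (l j m : ℕ) : (shape l j m).sum = 3 * l + 2 * j + m := by
  simp [shape, List.sum_replicate, mul_comm]; ring

lemma shape_getD_lo (l j m i : ℕ) (h : i < l) : (shape l j m).getD i 0 = 3 := by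
  simp [shape, List.getD_eq_getElem?_getD, List.getElem?_append, h]

lemma shape_getD_mid (l j m i : ℕ) (h1 : l ≤ i) (h2 : i < l + j) :
    (shape l j m).getD i 0 = 2 := by
  have h3 : i - l < j := by omega
  simp [shape, List.getD_eq_getElem?_getD, List.getElem?_append, h1, h2,
    Nat.not_lt.mpr h1, h3]

end Aux

/-- For a Dyck path of bounce number three, if a `P`-tableau of shape
`3^l 2^j 1^{n-3l-2j}` exists then `2l + j ≤ k = a + b`. -/
theorem ptab_exists_imp_two_l_add_j_le
    (n : ℕ) (D : DyckPath n) (h3 : D.BounceThree) (l j : ℕ) (hlj : 3 * l + 2 * j ≤ n)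
    (hex : ∃ L : List ℕ, D.IsPTab (shape l j (n - 3 * l - 2 * j)) L) :
    2 * l + j ≤ (n - D.m1) + (D.m1 - D.m0) := by
  obtain ⟨L, hperm, hμsum, hrow, _⟩ := hex
  set m : ℕ := n - 3 * l - 2 * j with hm
  set μ : List ℕ := shape l j m with hμ
  have hμlen : μ.length = l + j + m := shape_length l j m
  have hsum : μ.sum = n := hμsum
  have hLlen : L.length = n := by
    rw [hperm.length_eq]; simp
  have hnodup : L.Nodup := by
    rw [hperm.nodup_iff]
    exact (List.nodup_range (n := n)).map fun a b => by omega
  -- entry facts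
  have hmem : ∀ i c : ℕ, i < μ.length → c < μ.getD i 0 →
      1 ≤ entry μ L i c ∧ entry μ L i c ≤ n := by
    intro i c hi hc
    have hidx : rowStart μ i + c < L.length := by
      rw [hLlen, ← hsum]; exact idx_lt_sum μ hi hc
    have hmemL : entry μ L i c ∈ L := by
      unfold entry
      rw [List.getD_eq_getElem?_getD, List.getElem?_eq_getElem hidx]
      exact List.getElem_mem _
    have := hperm.subset hmemL
    simp only [List.mem_map, List.mem_range] at this
    obtain ⟨a, ha, heq2⟩ := this
    omega
  have hgt : ∀ i c : ℕ, i < μ.length → c + 1 < μ.getD i 0 →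
      D.m0 < entry μ L i (c + 1) := by
    intro i c hi hc
    obtain ⟨hx, hdx⟩ := hrow i c hi hc
    have hxb := hmem i c hi (by omega)
    have hmono : D.d 1 ≤ D.d (entry μ L i c) := D.mono 1 _ le_rfl hxb.1 hxb.2
    have : D.m0 = D.d 1 := rfl
    omega
  -- the enumeration of cells in columns ≥ 2
  let cell : ℕ → ℕ × ℕ := fun t =>
    if t < l then (t, 1) else if t < 2 * l then (t - l, 2) else (t - l, 1)
  have hcell : ∀ t, t < 2 * l + j →
      (cell t).1 < μ.length ∧ (cell t).2 < μ.getD (cell t).1 0 ∧ 1 ≤ (cell t).2 := by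
    intro t ht
    by_cases h1 : t < l
    · simp only [cell, if_pos h1]
      refine ⟨by omega, ?_, by omega⟩
      rw [hμ, shape_getD_lo l j m t h1]; omega
    · by_cases h2 : t < 2 * l
      · simp only [cell, if_neg h1, if_pos h2]
        refine ⟨by omega, ?_, by omega⟩
        rw [hμ, shape_getD_lo l j m (t - l) (by omega)]; omega
      · simp only [cell, if_neg h1, if_neg h2]
        refine ⟨by omega, ?_, by omega⟩
        rw [hμ, shape_getD_mid l j m (t - l) (by omega) (by omega)]; omega
  have hmaps : ∀ t ∈ Finset.range (2 * l + j),
      entry μ L (cell t).1 (cell t).2 ∈ Finset.Ioc D.m0 n := by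
    intro t ht
    rw [Finset.mem_range] at ht
    obtain ⟨h1, h2, h3⟩ := hcell t ht
    obtain ⟨c, hc⟩ : ∃ c, (cell t).2 = c + 1 := ⟨(cell t).2 - 1, by omega⟩
    rw [Finset.mem_Ioc]
    constructor
    · rw [hc]; exact hgt (cell t).1 c h1 (by omega)
    · exact (hmem (cell t).1 (cell t).2 h1 h2).2
  have hinj : Set.InjOn (fun t => entry μ L (cell t).1 (cell t).2)
      (Finset.range (2 * l + j)) := by
    intro t ht t' ht' heq
    simp only [Finset.coe_range, Set.mem_Iio] at ht ht'
    obtain ⟨h1, h2, _⟩ := hcell t ht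
    obtain ⟨h1', h2', _⟩ := hcell t' ht'
    have hidx : rowStart μ (cell t).1 + (cell t).2 < L.length := by
      rw [hLlen, ← hsum]; exact idx_lt_sum μ h1 h2
    have hidx' : rowStart μ (cell t').1 + (cell t').2 < L.length := by
      rw [hLlen, ← hsum]; exact idx_lt_sum μ h1' h2'
    have heq' : L[rowStart μ (cell t).1 + (cell t).2] =
        L[rowStart μ (cell t').1 + (cell t').2] := by
      have e1 : entry μ L (cell t).1 (cell t).2 = L[rowStart μ (cell t).1 + (cell t).2] := by
        unfold entry
        rw [List.getD_eq_getElem?_getD, List.getElem?_eq_getElem hidx]; rfl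
      have e2 : entry μ L (cell t').1 (cell t').2 = L[rowStart μ (cell t').1 + (cell t').2] := by
        unfold entry
        rw [List.getD_eq_getElem?_getD, List.getElem?_eq_getElem hidx']; rfl
      rw [← e1, ← e2]; exact heq
    have hidxeq : rowStart μ (cell t).1 + (cell t).2 =
        rowStart μ (cell t').1 + (cell t').2 :=
      (hnodup.getElem_inj_iff).mp heq'
    obtain ⟨hieq, hceq⟩ := idx_inj μ h1 h2 h1' h2' hidxeq
    -- deduce t = t'
    simp only [cell] at hieq hceq
    split_ifs at hieq hceq <;> omega
  have hcard := Finset.card_le_card_of_injOn _ hmaps hinj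
  rw [Finset.card_range, Nat.card_Ioc] at hcard
  -- m0 ≤ m1 ≤ n
  have hm0n : D.m0 < n := h3.1
  have hm1n : D.m1 ≤ n := D.le_n (D.m0 + 1) (by omega) (by omega)
  have hm01 : D.m0 ≤ D.m1 := by
    have : D.d 1 ≤ D.d (D.m0 + 1) := D.mono 1 (D.m0 + 1) le_rfl (by omega) (by omega)
    exact this
  omega
end

section
/- Let P = P(d) be the natural unit interval order of a Dyck path d with bounce number 3, and let T be a P-tableau. Fix a column index j and a row index i such that the cell (i,j) of T exists. Then there are at most two indices s > i such that the cell (s,j) exists and a_{r,j} ≺ a_{s,j} in P for every r with i ≤ r ≤ s−1 (where a_{r,j} denotes the entry of T in row r and column j). -/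
open scoped Classical

section Aux

lemma getD_le_of_forall (L : List ℕ) (n k : ℕ) (h : ∀ x ∈ L, x ≤ n) :
    L.getD k 0 ≤ n := by
  by_cases hk : k < L.length
  · rw [List.getD_eq_getElem L 0 hk]
    exact h _ (L.getElem_mem hk)
  · rw [List.getD_eq_default L 0 (le_of_not_gt hk)]
    exact Nat.zero_le n

lemma rowStart_add_lt (μ : List ℕ) (i j : ℕ) (hi : i < μ.length)
    (hj : j < μ.getD i 0) : rowStart μ i + j < μ.sum := by
  have h1 : (μ.take (i+1)).sum = (μ.take i).sum + μ.getD i 0 := by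
    rw [List.sum_take_succ μ i hi, List.getD_eq_getElem μ 0 hi]
  have h2 : (μ.take (i+1)).sum ≤ μ.sum := by
    conv_rhs => rw [← List.take_append_drop (i+1) μ]
    rw [List.sum_append]
    exact Nat.le_add_right _ _
  have : rowStart μ i + j < (μ.take (i+1)).sum := by
    rw [h1]; unfold rowStart; omega
  omega

lemma no_chain4 {n : ℕ} (D : DyckPath n) (h3 : D.BounceThree)
    {x1 x2 x3 x4 : ℕ} (hx1 : 1 ≤ x1) (hx4 : x4 ≤ n)
    (h12 : D.prec x1 x2) (h23 : D.prec x2 x3) (h34 : D.prec x3 x4) : False := by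
  obtain ⟨hx1n, hd1⟩ := h12
  obtain ⟨hx2n, hd2⟩ := h23
  obtain ⟨hx3n, hd3⟩ := h34
  have hm0 : D.m0 ≤ D.d x1 := D.mono 1 x1 le_rfl hx1 (le_of_lt hx1n)
  have hx2 : D.m0 + 1 ≤ x2 := by omega
  have hm1 : D.m1 ≤ D.d x2 := D.mono (D.m0 + 1) x2 (Nat.le_add_left _ _) hx2 (le_of_lt hx2n)
  have hx3 : D.m1 + 1 ≤ x3 := by omega
  have hm2 : D.bounce 2 ≤ D.d x3 :=
    D.mono (D.m1 + 1) x3 (Nat.le_add_left _ _) hx3 (le_of_lt hx3n)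
  rw [h3.2.2] at hm2
  omega

end Aux

/-- In a `P`-tableau for a Dyck path of bounce number three, for any cell
`(i,j)` there are at most two rows `s > i` with a cell in column `j` such that every entry
`a_{r,j}` with `i ≤ r ≤ s-1` satisfies `a_{r,j} ≺ a_{s,j}`. -/
theorem at_most_two_chain_tops_in_column
    (n : ℕ) (D : DyckPath n) (h3 : D.BounceThree) (μ L : List ℕ)
    (hsort : μ.Pairwise (· ≥ ·)) (hpos : ∀ x ∈ μ, 0 < x) (hT : D.IsPTab μ L)
    (i j : ℕ) (hi : i < μ.length) (hj : j < μ.getD i 0) :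
    ((Finset.range μ.length).filter fun s =>
      i < s ∧ j < μ.getD s 0 ∧
        ∀ r : ℕ, i ≤ r → r < s → D.prec (entry μ L r j) (entry μ L s j)).card ≤ 2 := by
  classical
  -- basic facts about L
  obtain ⟨hperm, hsum, hrow, hcol⟩ := hT
  have hLlen : L.length = n := by
    have := hperm.length_eq
    simpa using this
  have hLmem : ∀ x ∈ L, 1 ≤ x ∧ x ≤ n := by
    intro x hx
    have hx' : x ∈ List.map (· + 1) (List.range n) := hperm.mem_iff.mp hx
    simp only [List.mem_map, List.mem_range] at hx'
    obtain ⟨y, hy, rfl⟩ := hx'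
    omega
  have entry_le : ∀ a b : ℕ, entry μ L a b ≤ n := by
    intro a b
    exact getD_le_of_forall L n _ (fun x hx => (hLmem x hx).2)
  have one_le_entry : ∀ a b : ℕ, a < μ.length → b < μ.getD a 0 → 1 ≤ entry μ L a b := by
    intro a b ha hb
    have hlt : rowStart μ a + b < L.length := by
      rw [hLlen, ← hsum]; exact rowStart_add_lt μ a b ha hb
    unfold entry
    rw [List.getD_eq_getElem L 0 hlt]
    exact (hLmem _ (L.getElem_mem hlt)).1
  set S := (Finset.range μ.length).filter fun s =>
      i < s ∧ j < μ.getD s 0 ∧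
        ∀ r : ℕ, i ≤ r → r < s → D.prec (entry μ L r j) (entry μ L s j) with hS
  have memS : ∀ s ∈ S, s < μ.length ∧ i < s ∧ j < μ.getD s 0 ∧
      ∀ r : ℕ, i ≤ r → r < s → D.prec (entry μ L r j) (entry μ L s j) := by
    intro s hs
    simp only [hS, Finset.mem_filter, Finset.mem_range] at hs
    tauto
  have key : ∀ p q r : ℕ, p ∈ S → q ∈ S → r ∈ S → p < q → q < r → False := by
    intro p q r hp hq hr hpq hqr
    obtain ⟨hpl, hip, hjp, hcp⟩ := memS p hp
    obtain ⟨hql, hiq, hjq, hcq⟩ := memS q hq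
    obtain ⟨hrl, hir, hjr, hcr⟩ := memS r hr
    have h12 : D.prec (entry μ L i j) (entry μ L p j) := hcp i le_rfl hip
    have h23 : D.prec (entry μ L p j) (entry μ L q j) := hcq p (le_of_lt hip) hpq
    have h34 : D.prec (entry μ L q j) (entry μ L r j) := hcr q (le_of_lt hiq) hqr
    exact no_chain4 D h3 (one_le_entry i j hi hj) (entry_le r j) h12 h23 h34
  by_contra hcard
  push_neg at hcard
  rw [Finset.two_lt_card] at hcard
  obtain ⟨a, ha, b, hb, c, hc, hab, hac, hbc⟩ := hcard
  rcases lt_trichotomy a b with h1 | h1 | h1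
  · rcases lt_trichotomy b c with h2 | h2 | h2
    · exact key a b c ha hb hc h1 h2
    · exact hbc h2
    · rcases lt_trichotomy a c with h3 | h3 | h3
      · exact key a c b ha hc hb h3 h2
      · exact hac h3
      · exact key c a b hc ha hb h3 h1
  · exact hab h1
  · rcases lt_trichotomy a c with h2 | h2 | h2
    · exact key b a c hb ha hc h1 h2
    · exact hac h2
    · rcases lt_trichotomy b c with h3 | h3 | h3
      · exact key b c a hb hc ha h3 h2
      · exact hbc h3
      · exact key c b a hc hb ha h3 h1
end

section
/- Let P = P(d) be the natural unit interval order on {1,…,n} of a Dyck path d with bounce number 3. For every integer l with 0 ≤ l ≤ min{a,b,c}, the polynomial B_{3^l 1^{n-3l}}(q) − B_{3^l 2^1 1^{n-3l-2}}(q) + B_{3^{l+1} 1^{n-3l-3}}(q), which is the coefficient of e_{(n-2l,l,l)} in the elementary symmetric function expansion of the chromatic quasisymmetric function X_{inc(P)}(x,q), has nonnegative integer coefficients, i.e., lies in ℕ[q]. -/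
open scoped Classical

namespace EPos

open List

variable {n : ℕ}

/-- convenient indexing into a word -/
def el (xs : List ℕ) (p : ℕ) : ℕ := xs.getD p 0

lemma el_eq_getElem {xs : List ℕ} {p : ℕ} (h : p < xs.length) : el xs p = xs[p] := by
  simp [el, List.getD_eq_getElem?_getD, List.getElem?_eq_getElem h]

lemma el_mem {xs : List ℕ} {p : ℕ} (h : p < xs.length) : el xs p ∈ xs := by
  rw [el_eq_getElem h]; exact List.getElem_mem h

section order
variable (D : DyckPath n)

lemma prec_trans {a b c : ℕ} (hb1 : 1 ≤ b) (hbn : b ≤ n) (h1 : D.prec a b) (h2 : D.prec b c) :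
    D.prec a c := by
  refine ⟨h1.1, lt_of_lt_of_le h1.2 ?_⟩
  exact le_trans (D.ge_self b hb1 hbn) (le_of_lt h2.2)

lemma prec_asymm {a b : ℕ} (ha1 : 1 ≤ a) (han : a ≤ n) (h : D.prec a b) : ¬ D.prec b a := by
  rintro ⟨hbn, hdb⟩
  have hab := h.2
  have hb1 : 1 ≤ b := le_trans (le_trans ha1 (D.ge_self a ha1 han)) (le_of_lt h.2)
  have := D.ge_self b hb1 (le_of_lt hbn)
  have := D.ge_self a ha1 han
  omega

lemma nprec_of_nprec_prec {t u x : ℕ} (hx1 : 1 ≤ x) (hxn : x ≤ n) (h1 : ¬ D.prec t u)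
    (h2 : D.prec x u) : ¬ D.prec t x := by
  rintro ⟨htn, hdt⟩
  exact h1 ⟨htn, lt_of_lt_of_le hdt (le_trans (D.ge_self x hx1 hxn) (le_of_lt h2.2))⟩

lemma d_eq_n_of_chain (h3 : D.BounceThree) {x u v : ℕ} (hx1 : 1 ≤ x) (hxn : x ≤ n)
    (hun : u ≤ n) (hvn : v ≤ n) (h1 : D.prec x u) (h2 : D.prec u v) : n ≤ D.d v := by
  have hm0 : D.m0 ≤ D.d x := D.mono 1 x (le_refl 1) hx1 hxn
  have hu : D.m0 + 1 ≤ u := by have := h1.2; unfold DyckPath.m0 DyckPath.bounce at *; omega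
  have hm1 : D.m1 ≤ D.d u := by
    have := D.mono (D.m0 + 1) u (by omega) hu hun
    unfold DyckPath.m1 DyckPath.bounce at *
    exact this
  have hv : D.m1 + 1 ≤ v := by have := h2.2; omega
  have := D.mono (D.m1 + 1) v (by omega) hv hvn
  have h2n := h3.2.2
  unfold DyckPath.bounce at h2n
  unfold DyckPath.m1 DyckPath.bounce at *
  omega

lemma nprec_of_chain (h3 : D.BounceThree) {x u v w : ℕ} (hx1 : 1 ≤ x) (hxn : x ≤ n)
    (hun : u ≤ n) (hvn : v ≤ n) (hwn : w ≤ n) (h1 : D.prec x u) (h2 : D.prec u v) :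
    ¬ D.prec v w := by
  rintro ⟨hvltn, hdv⟩
  have := d_eq_n_of_chain D h3 hx1 hxn hun hvn h1 h2
  omega

end order

section rowstart

lemma rowStart_zero (μ : List ℕ) : rowStart μ 0 = 0 := rfl

lemma rowStart_succ {μ : List ℕ} {i : ℕ} (h : i < μ.length) :
    rowStart μ (i + 1) = rowStart μ i + μ.getD i 0 := by
  unfold rowStart
  rw [List.take_succ, List.sum_append, List.getElem?_eq_getElem h]
  simp [List.getD_eq_getElem?_getD, List.getElem?_eq_getElem h]

lemma rowStart_mono (μ : List ℕ) {i j : ℕ} (h : i ≤ j) : rowStart μ i ≤ rowStart μ j := by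
  unfold rowStart
  calc (μ.take i).sum = ((μ.take j).take i).sum := by rw [List.take_take, Nat.min_eq_left h]
    _ ≤ ((μ.take j).take i).sum + ((μ.take j).drop i).sum := Nat.le_add_right _ _
    _ = (μ.take j).sum := by rw [← List.sum_append, List.take_append_drop]

lemma rowStart_le_sum (μ : List ℕ) (i : ℕ) : rowStart μ i ≤ μ.sum := by
  have := rowStart_mono μ (Nat.le_max_left i μ.length)
  calc rowStart μ i ≤ rowStart μ (max i μ.length) := this
    _ ≤ μ.sum := by
        unfold rowStart
        rw [List.take_of_length_le (le_max_right _ _)]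

/-- the row containing position p -/
def rowIdx (μ : List ℕ) (p : ℕ) : ℕ :=
  (List.range μ.length).countP (fun i => rowStart μ (i + 1) ≤ p)

lemma rowIdx_spec {μ : List ℕ} {i j : ℕ} (hi : i < μ.length) (hj : j < μ.getD i 0) :
    rowIdx μ (rowStart μ i + j) = i := by
  unfold rowIdx
  have key : ∀ i' ∈ List.range μ.length,
      (decide (rowStart μ (i' + 1) ≤ rowStart μ i + j) = true ↔ decide (i' < i) = true) := by
    intro i' _
    simp only [decide_eq_true_eq]
    constructor
    · intro h
      by_contra hc
      push_neg at hc
      have h1 : rowStart μ (i + 1) ≤ rowStart μ (i' + 1) := rowStart_mono μ (by omega)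
      rw [rowStart_succ hi] at h1
      omega
    · intro h
      have := rowStart_mono μ (show i' + 1 ≤ i by omega)
      omega
  rw [List.countP_congr key]
  have hrange : List.range μ.length = List.range i ++ (List.range (μ.length - i)).map (i + ·) := by
    rw [← List.range_add]
    congr 1
    omega
  rw [hrange, List.countP_append]
  have h1 : (List.range i).countP (fun i' => decide (i' < i)) = i := by
    rw [List.countP_eq_length_filter, List.filter_eq_self.mpr, List.length_range]
    intro a ha
    simp only [decide_eq_true_eq]
    exact List.mem_range.mp ha
  have h2 : ((List.range (μ.length - i)).map (i + ·)).countP (fun i' => decide (i' < i)) = 0 := by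
    rw [List.countP_eq_zero]
    intro a ha
    simp only [List.mem_map] at ha
    obtain ⟨b, _, rfl⟩ := ha
    simp
  omega

lemma exists_cell {μ : List ℕ} : ∀ {p : ℕ}, p < μ.sum →
    ∃ i j, i < μ.length ∧ j < μ.getD i 0 ∧ p = rowStart μ i + j := by
  induction μ with
  | nil => intro p hp; simp at hp
  | cons a μ' ih =>
    intro p hp
    by_cases h : p < a
    · exact ⟨0, p, by simp, by simpa [List.getD] using h, by simp [rowStart_zero]⟩
    · push_neg at h
      have : p - a < μ'.sum := by simp [List.sum_cons] at hp; omega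
      obtain ⟨i, j, h1, h2, h3⟩ := ih this
      refine ⟨i + 1, j, by simpa using h1, by simpa using h2, ?_⟩
      have : rowStart (a :: μ') (i + 1) = a + rowStart μ' i := by
        unfold rowStart
        simp [List.take_succ_cons]
      omega

lemma getD_le_foldr_max (μ : List ℕ) : ∀ {i : ℕ}, i < μ.length → μ.getD i 0 ≤ μ.foldr max 0 := by
  induction μ with
  | nil => intro i h; simp at h
  | cons a μ' ih =>
    intro i h
    cases i with
    | zero => simp [List.getD]
    | succ i' =>
      simp only [List.length_cons, Nat.succ_lt_succ_iff] at h
      calc (a :: μ').getD (i' + 1) 0 = μ'.getD i' 0 := by simp [List.getD]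
        _ ≤ μ'.foldr max 0 := ih h
        _ ≤ (a :: μ').foldr max 0 := by simp [List.foldr]

lemma mem_cellsOf {μ : List ℕ} {c : ℕ × ℕ} :
    c ∈ cellsOf μ ↔ c.1 < μ.length ∧ c.2 < μ.getD c.1 0 := by
  unfold cellsOf
  simp only [Finset.mem_filter, Finset.mem_product, Finset.mem_range]
  constructor
  · tauto
  · rintro ⟨h1, h2⟩
    exact ⟨⟨h1, lt_of_lt_of_le h2 (getD_le_foldr_max μ h1)⟩, h2⟩

end rowstart

section posinv

variable (D : DyckPath n)

/-- inversion count expressed via positions in the reading word -/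
noncomputable def posInv (μ L : List ℕ) : ℕ :=
  ((Finset.range μ.sum ×ˢ Finset.range μ.sum).filter fun pq =>
    rowIdx μ pq.1 < rowIdx μ pq.2 ∧ el L pq.2 < el L pq.1 ∧
      D.Incomp (el L pq.1) (el L pq.2)).card

lemma pos_lt_sum {μ : List ℕ} {i j : ℕ} (hi : i < μ.length) (hj : j < μ.getD i 0) :
    rowStart μ i + j < μ.sum := by
  have h1 : rowStart μ i + j < rowStart μ (i + 1) := by rw [rowStart_succ hi]; omega
  have h2 : rowStart μ (i + 1) ≤ μ.sum := rowStart_le_sum μ _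
  omega

lemma invNum_eq_posInv (μ L : List ℕ) : D.invNum μ L = posInv D μ L := by
  unfold DyckPath.invNum posInv
  refine Finset.card_bij (fun c _ => (rowStart μ c.1.1 + c.1.2, rowStart μ c.2.1 + c.2.2)) ?_ ?_ ?_
  · rintro ⟨⟨i1, j1⟩, ⟨i2, j2⟩⟩ hc
    simp only [Finset.mem_filter, Finset.mem_product] at hc
    obtain ⟨⟨hc1, hc2⟩, hrow, hval, hinc⟩ := hc
    rw [mem_cellsOf] at hc1 hc2
    simp only [Finset.mem_filter, Finset.mem_product, Finset.mem_range]
    refine ⟨⟨pos_lt_sum hc1.1 hc1.2, pos_lt_sum hc2.1 hc2.2⟩, ?_, ?_, ?_⟩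
    · rw [rowIdx_spec hc1.1 hc1.2, rowIdx_spec hc2.1 hc2.2]; exact hrow
    · exact hval
    · exact hinc
  · rintro ⟨⟨i1, j1⟩, ⟨i2, j2⟩⟩ hc ⟨⟨i1', j1'⟩, ⟨i2', j2'⟩⟩ hc' heq
    simp only [Finset.mem_filter, Finset.mem_product] at hc hc'
    obtain ⟨⟨hc1, hc2⟩, -⟩ := hc
    obtain ⟨⟨hc1', hc2'⟩, -⟩ := hc'
    rw [mem_cellsOf] at hc1 hc2 hc1' hc2'
    simp only [Prod.mk.injEq] at heq
    obtain ⟨e1, e2⟩ := heq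
    have hi1 : i1 = i1' := by
      have u1 := rowIdx_spec hc1.1 hc1.2
      have u2 := rowIdx_spec hc1'.1 hc1'.2
      rw [e1] at u1
      rw [u2] at u1
      exact u1.symm
    have hi2 : i2 = i2' := by
      have u1 := rowIdx_spec hc2.1 hc2.2
      have u2 := rowIdx_spec hc2'.1 hc2'.2
      rw [e2] at u1
      rw [u2] at u1
      exact u1.symm
    subst hi1; subst hi2
    have hj1 : j1 = j1' := by omega
    have hj2 : j2 = j2' := by omega
    rw [hj1, hj2]
  · rintro ⟨p, q⟩ hb
    simp only [Finset.mem_filter, Finset.mem_product, Finset.mem_range] at hb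
    obtain ⟨⟨hp, hq⟩, hrow, hval, hinc⟩ := hb
    obtain ⟨i1, j1, hi1, hj1, rfl⟩ := exists_cell hp
    obtain ⟨i2, j2, hi2, hj2, rfl⟩ := exists_cell hq
    refine ⟨⟨⟨i1, j1⟩, ⟨i2, j2⟩⟩, ?_, rfl⟩
    simp only [Finset.mem_filter, Finset.mem_product]
    rw [rowIdx_spec hi1 hj1, rowIdx_spec hi2 hj2] at hrow
    exact ⟨⟨mem_cellsOf.mpr ⟨hi1, hj1⟩, mem_cellsOf.mpr ⟨hi2, hj2⟩⟩, hrow, hval, hinc⟩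

lemma posInv_eq_of_rearrange {μ μ' L L' : List ℕ} {N : ℕ} (hs : μ.sum = N) (hs' : μ'.sum = N)
    (g g' : ℕ → ℕ)
    (hg : ∀ p < N, g p < N) (hg' : ∀ p < N, g' p < N)
    (hgg : ∀ p < N, g' (g p) = p) (hgg' : ∀ p < N, g (g' p) = p)
    (hval : ∀ p < N, el L' (g p) = el L p)
    (hrow : ∀ p q, p < N → q < N → D.Incomp (el L p) (el L q) →
      (rowIdx μ' (g p) < rowIdx μ' (g q) ↔ rowIdx μ p < rowIdx μ q)) :
    posInv D μ L = posInv D μ' L' := by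
  unfold posInv
  rw [hs, hs']
  refine Finset.card_bij (fun pq _ => (g pq.1, g pq.2)) ?_ ?_ ?_
  · rintro ⟨p, q⟩ hm
    simp only [Finset.mem_filter, Finset.mem_product, Finset.mem_range] at hm
    obtain ⟨⟨hp, hq⟩, hr, hv, hi⟩ := hm
    simp only [Finset.mem_filter, Finset.mem_product, Finset.mem_range]
    rw [hval p hp, hval q hq]
    exact ⟨⟨hg p hp, hg q hq⟩, (hrow p q hp hq hi).mpr hr, hv, hi⟩
  · rintro ⟨p, q⟩ hm ⟨p', q'⟩ hm' heq
    simp only [Finset.mem_filter, Finset.mem_product, Finset.mem_range] at hm hm'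
    simp only [Prod.mk.injEq] at heq ⊢
    constructor
    · have h1 := hgg p hm.1.1
      have h2 := hgg p' hm'.1.1
      rw [heq.1] at h1
      rw [h2] at h1
      exact h1.symm
    · have h1 := hgg q hm.1.2
      have h2 := hgg q' hm'.1.2
      rw [heq.2] at h1
      rw [h2] at h1
      exact h1.symm
  · rintro ⟨p', q'⟩ hm
    simp only [Finset.mem_filter, Finset.mem_product, Finset.mem_range] at hm
    obtain ⟨⟨hp', hq'⟩, hr, hv, hi⟩ := hm
    refine ⟨(g' p', g' q'), ?_, by simp [hgg' p' hp', hgg' q' hq']⟩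
    simp only [Finset.mem_filter, Finset.mem_product, Finset.mem_range]
    have e1 : el L' p' = el L (g' p') := by rw [← hval _ (hg' p' hp'), hgg' p' hp']
    have e2 : el L' q' = el L (g' q') := by rw [← hval _ (hg' q' hq'), hgg' q' hq']
    rw [e1, e2] at hv hi
    refine ⟨⟨hg' p' hp', hg' q' hq'⟩, ?_, hv, hi⟩
    have := hrow (g' p') (g' q') (hg' p' hp') (hg' q' hq') hi
    rw [hgg' p' hp', hgg' q' hq'] at this
    exact this.mp hr

end posinv

end EPos
namespace EPos

variable {n : ℕ}

lemma entry_eq (μ L : List ℕ) (i j : ℕ) : entry μ L i j = el L (rowStart μ i + j) := rfl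

lemma prec_el_iff (D : DyckPath n) (L : List ℕ) {p p' q q' : ℕ} (hp : p = p') (hq : q = q') :
    D.prec (el L p) (el L q) ↔ D.prec (el L p') (el L q') := by rw [hp, hq]

lemma getD_replicate {a d : ℕ} {k i : ℕ} :
    (List.replicate k a).getD i d = if i < k then a else d := by
  rw [List.getD_eq_getElem?_getD, List.getElem?_replicate]
  split
  · next h => simp [h]
  · next h => simp [h]

lemma shape_length (l j m : ℕ) : (shape l j m).length = l + j + m := by
  simp [shape]; omega

lemma shape_sum (l j m : ℕ) : (shape l j m).sum = 3 * l + 2 * j + m := by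
  simp [shape, List.sum_replicate, smul_eq_mul]; ring

lemma shape_getD (l j m i : ℕ) :
    (shape l j m).getD i 0 =
      if i < l then 3 else if i < l + j then 2 else if i < l + j + m then 1 else 0 := by
  unfold shape
  by_cases h2 : i < l + j
  · rw [List.getD_append _ _ _ _ (by simp only [List.length_append, List.length_replicate]; omega)]
    by_cases h1 : i < l
    · rw [List.getD_append _ _ _ _ (by simp only [List.length_append, List.length_replicate]; omega)]
      rw [getD_replicate]
      simp [h1]
    · rw [List.getD_append_right _ _ _ _ (by simp only [List.length_append, List.length_replicate]; omega)]
      simp only [List.length_replicate]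
      rw [getD_replicate]
      simp only [if_pos (show i - l < j by omega)]
      simp [h1, h2]
  · rw [List.getD_append_right _ _ _ _ (by simp only [List.length_append, List.length_replicate]; omega)]
    simp only [List.length_append, List.length_replicate]
    rw [getD_replicate]
    by_cases h3 : i < l + j + m
    · simp only [if_pos (show i - (l + j) < m by omega)]
      simp [show ¬ i < l by omega, h2, h3]
    · simp only [if_neg (show ¬ (i - (l + j) < m) by omega)]
      simp [show ¬ i < l by omega, h2, h3]

lemma rowStart_shape (l j m i : ℕ) :
    rowStart (shape l j m) i = 3 * min i l + 2 * min (i - l) j + min (i - l - j) m := by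
  unfold rowStart shape
  rw [List.take_append, List.take_append]
  simp [List.take_replicate, List.sum_replicate, smul_eq_mul, List.length_replicate]
  omega

lemma rowIdx_shape_lo {l jj m p : ℕ} (hp : p < 3 * l) :
    rowIdx (shape l jj m) p = p / 3 := by
  have h := rowIdx_spec (μ := shape l jj m) (i := p / 3) (j := p % 3)
    (by rw [shape_length]; omega)
    (by rw [shape_getD]; simp only [if_pos (show p / 3 < l by omega)]; omega)
  have e : rowStart (shape l jj m) (p / 3) + p % 3 = p := by
    rw [rowStart_shape]; omega
  rw [e] at h
  exact h

lemma rowIdx_shape_mid {l m p : ℕ} (hp1 : 3 * l ≤ p) (hp2 : p < 3 * l + 2) :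
    rowIdx (shape l 1 m) p = l := by
  have h := rowIdx_spec (μ := shape l 1 m) (i := l) (j := p - 3 * l)
    (by rw [shape_length]; omega)
    (by rw [shape_getD]
        simp only [if_neg (lt_irrefl l), if_pos (show l < l + 1 by omega)]
        omega)
  have e : rowStart (shape l 1 m) l + (p - 3 * l) = p := by
    rw [rowStart_shape]; omega
  rw [e] at h
  exact h

lemma rowIdx_shape_hi {l jj m p : ℕ} (hp1 : 3 * l + 2 * jj ≤ p) (hp2 : p < 3 * l + 2 * jj + m) :
    rowIdx (shape l jj m) p = l + jj + (p - 3 * l - 2 * jj) := by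
  have h := rowIdx_spec (μ := shape l jj m) (i := l + jj + (p - 3 * l - 2 * jj)) (j := 0)
    (by rw [shape_length]; omega)
    (by rw [shape_getD]
        simp only [if_neg (show ¬ (l + jj + (p - 3*l - 2*jj) < l) by omega),
          if_neg (show ¬ (l + jj + (p - 3*l - 2*jj) < l + jj) by omega),
          if_pos (show l + jj + (p - 3*l - 2*jj) < l + jj + m by omega)]
        omega)
  have e : rowStart (shape l jj m) (l + jj + (p - 3 * l - 2 * jj)) + 0 = p := by
    rw [rowStart_shape]; omega
  rw [e] at h
  exact h

section charact

variable (D : DyckPath n)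

/-- the first `l` rows (of length 3) are `≺`-chains -/
def rows3 (L : List ℕ) (l : ℕ) : Prop :=
  ∀ i < l, D.prec (el L (3*i)) (el L (3*i+1)) ∧ D.prec (el L (3*i+1)) (el L (3*i+2))

/-- vertical conditions inside the first `l` rows -/
def vert3 (L : List ℕ) (l : ℕ) : Prop :=
  ∀ i j : ℕ, i + 1 < l → j < 3 → ¬ D.prec (el L (3*(i+1)+j)) (el L (3*i+j))

lemma ptab1_iff (l' m : ℕ) (L : List ℕ) :
    D.IsPTab (shape l' 0 m) L ↔
      L.Perm (List.map (· + 1) (List.range n)) ∧ 3 * l' + m = n ∧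
      rows3 D L l' ∧ vert3 D L l' ∧
      (1 ≤ l' → 1 ≤ m → ¬ D.prec (el L (3*l')) (el L (3*l' - 3))) ∧
      (∀ kk, kk + 1 < m → ¬ D.prec (el L (3*l' + kk + 1)) (el L (3*l' + kk))) := by
  unfold DyckPath.IsPTab
  rw [shape_sum]
  constructor
  · rintro ⟨hperm, hsum, hor, hver⟩
    refine ⟨hperm, by omega, ?_, ?_, ?_, ?_⟩
    · intro i hi
      have h1 := hor i 0 (by rw [shape_length]; omega)
        (by rw [shape_getD]; simp only [if_pos hi]; omega)
      have h2 := hor i 1 (by rw [shape_length]; omega)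
        (by rw [shape_getD]; simp only [if_pos hi]; omega)
      simp only [entry_eq, rowStart_shape] at h1 h2
      constructor
      · exact (prec_el_iff D L (by omega) (by omega)).mp h1
      · exact (prec_el_iff D L (by omega) (by omega)).mp h2
    · intro i j hi hj
      have h1 := hver i j (by rw [shape_length]; omega)
        (by rw [shape_getD]; simp only [if_pos (show i + 1 < l' from hi)]; omega)
      simp only [entry_eq, rowStart_shape] at h1
      intro hc
      exact h1 ((prec_el_iff D L (by omega) (by omega)).mp hc)
    · intro hl' hm
      have h1 := hver (l' - 1) 0 (by rw [shape_length]; omega)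
        (by rw [shape_getD]
            simp only [if_neg (show ¬ (l' - 1 + 1 < l') by omega)]
            simp only [if_neg (show ¬ (l' - 1 + 1 < l' + 0) by omega)]
            simp only [if_pos (show l' - 1 + 1 < l' + 0 + m by omega)]
            omega)
      simp only [entry_eq, rowStart_shape] at h1
      intro hc
      exact h1 ((prec_el_iff D L (by omega) (by omega)).mp hc)
    · intro kk hkk
      have h1 := hver (l' + kk) 0 (by rw [shape_length]; omega)
        (by rw [shape_getD]
            simp only [if_neg (show ¬ (l' + kk + 1 < l') by omega)]
            simp only [if_neg (show ¬ (l' + kk + 1 < l' + 0) by omega)]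
            simp only [if_pos (show l' + kk + 1 < l' + 0 + m by omega)]
            omega)
      simp only [entry_eq, rowStart_shape] at h1
      intro hc
      exact h1 ((prec_el_iff D L (by omega) (by omega)).mp hc)
  · rintro ⟨hperm, hsum, hr3, hv3, hjun, hvs⟩
    refine ⟨hperm, by omega, ?_, ?_⟩
    · intro i j hi hj
      rw [shape_length] at hi
      rw [shape_getD] at hj
      by_cases h1 : i < l'
      · simp only [if_pos h1] at hj
        simp only [entry_eq, rowStart_shape]
        rcases (show j = 0 ∨ j = 1 by omega) with rfl | rfl
        · exact (prec_el_iff D L (by omega) (by omega)).mp (hr3 i h1).1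
        · exact (prec_el_iff D L (by omega) (by omega)).mp (hr3 i h1).2
      · exfalso
        simp only [if_neg h1, if_neg (show ¬ i < l' + 0 by omega)] at hj
        split at hj <;> omega
    · intro i j hi hj
      rw [shape_length] at hi
      rw [shape_getD] at hj
      by_cases h1 : i + 1 < l'
      · simp only [if_pos h1] at hj
        have hv := hv3 i j h1 (by omega)
        simp only [entry_eq, rowStart_shape]
        intro hc
        exact hv ((prec_el_iff D L (by omega) (by omega)).mp hc)
      · by_cases h2 : i + 1 = l'
        · simp only [if_neg h1, if_neg (show ¬ i + 1 < l' + 0 by omega),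
            if_pos (show i + 1 < l' + 0 + m by omega)] at hj
          have hv := hjun (by omega) (by omega)
          simp only [entry_eq, rowStart_shape]
          intro hc
          exact hv ((prec_el_iff D L (by omega) (by omega)).mp hc)
        · simp only [if_neg h1, if_neg (show ¬ i + 1 < l' + 0 by omega),
            if_pos (show i + 1 < l' + 0 + m by omega)] at hj
          have hv := hvs (i - l') (by omega)
          simp only [entry_eq, rowStart_shape]
          intro hc
          exact hv ((prec_el_iff D L (by omega) (by omega)).mp hc)

lemma ptab2_iff (l' m : ℕ) (L : List ℕ) :
    D.IsPTab (shape l' 1 m) L ↔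
      L.Perm (List.map (· + 1) (List.range n)) ∧ 3 * l' + 2 + m = n ∧
      rows3 D L l' ∧ vert3 D L l' ∧
      D.prec (el L (3*l')) (el L (3*l'+1)) ∧
      (1 ≤ l' → ¬ D.prec (el L (3*l')) (el L (3*l' - 3)) ∧
        ¬ D.prec (el L (3*l'+1)) (el L (3*l' - 2))) ∧
      (1 ≤ m → ¬ D.prec (el L (3*l'+2)) (el L (3*l'))) ∧
      (∀ kk, kk + 1 < m → ¬ D.prec (el L (3*l' + 2 + kk + 1)) (el L (3*l' + 2 + kk))) := by
  unfold DyckPath.IsPTab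
  rw [shape_sum]
  constructor
  · rintro ⟨hperm, hsum, hor, hver⟩
    refine ⟨hperm, by omega, ?_, ?_, ?_, ?_, ?_, ?_⟩
    · intro i hi
      have h1 := hor i 0 (by rw [shape_length]; omega)
        (by rw [shape_getD]; simp only [if_pos hi]; omega)
      have h2 := hor i 1 (by rw [shape_length]; omega)
        (by rw [shape_getD]; simp only [if_pos hi]; omega)
      simp only [entry_eq, rowStart_shape] at h1 h2
      constructor
      · exact (prec_el_iff D L (by omega) (by omega)).mp h1
      · exact (prec_el_iff D L (by omega) (by omega)).mp h2
    · intro i j hi hj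
      have h1 := hver i j (by rw [shape_length]; omega)
        (by rw [shape_getD]; simp only [if_pos (show i + 1 < l' from hi)]; omega)
      simp only [entry_eq, rowStart_shape] at h1
      intro hc
      exact h1 ((prec_el_iff D L (by omega) (by omega)).mp hc)
    · have h1 := hor l' 0 (by rw [shape_length]; omega)
        (by rw [shape_getD]
            simp only [if_neg (lt_irrefl l'), if_pos (show l' < l' + 1 by omega)]
            omega)
      simp only [entry_eq, rowStart_shape] at h1
      exact (prec_el_iff D L (by omega) (by omega)).mp h1
    · intro hl'
      constructor
      · have h1 := hver (l' - 1) 0 (by rw [shape_length]; omega)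
          (by rw [shape_getD]
              simp only [if_neg (show ¬ (l' - 1 + 1 < l') by omega),
                if_pos (show l' - 1 + 1 < l' + 1 by omega)]
              omega)
        simp only [entry_eq, rowStart_shape] at h1
        intro hc
        exact h1 ((prec_el_iff D L (by omega) (by omega)).mp hc)
      · have h1 := hver (l' - 1) 1 (by rw [shape_length]; omega)
          (by rw [shape_getD]
              simp only [if_neg (show ¬ (l' - 1 + 1 < l') by omega),
                if_pos (show l' - 1 + 1 < l' + 1 by omega)]
              omega)
        simp only [entry_eq, rowStart_shape] at h1
        intro hc
        exact h1 ((prec_el_iff D L (by omega) (by omega)).mp hc)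
    · intro hm
      have h1 := hver l' 0 (by rw [shape_length]; omega)
        (by rw [shape_getD]
            simp only [if_neg (show ¬ (l' + 1 < l') by omega),
              if_neg (show ¬ (l' + 1 < l' + 1) by omega),
              if_pos (show l' + 1 < l' + 1 + m by omega)]
            omega)
      simp only [entry_eq, rowStart_shape] at h1
      intro hc
      exact h1 ((prec_el_iff D L (by omega) (by omega)).mp hc)
    · intro kk hkk
      have h1 := hver (l' + 1 + kk) 0 (by rw [shape_length]; omega)
        (by rw [shape_getD]
            simp only [if_neg (show ¬ (l' + 1 + kk + 1 < l') by omega),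
              if_neg (show ¬ (l' + 1 + kk + 1 < l' + 1) by omega),
              if_pos (show l' + 1 + kk + 1 < l' + 1 + m by omega)]
            omega)
      simp only [entry_eq, rowStart_shape] at h1
      intro hc
      exact h1 ((prec_el_iff D L (by omega) (by omega)).mp hc)
  · rintro ⟨hperm, hsum, hr3, hv3, hxy, hjun, hjun2, hvs⟩
    refine ⟨hperm, by omega, ?_, ?_⟩
    · intro i j hi hj
      rw [shape_length] at hi
      rw [shape_getD] at hj
      by_cases h1 : i < l'
      · simp only [if_pos h1] at hj
        simp only [entry_eq, rowStart_shape]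
        rcases (show j = 0 ∨ j = 1 by omega) with rfl | rfl
        · exact (prec_el_iff D L (by omega) (by omega)).mp (hr3 i h1).1
        · exact (prec_el_iff D L (by omega) (by omega)).mp (hr3 i h1).2
      · by_cases h2 : i = l'
        · simp only [if_neg h1, if_pos (show i < l' + 1 by omega)] at hj
          have hj0 : j = 0 := by omega
          subst hj0; subst h2
          simp only [entry_eq, rowStart_shape]
          exact (prec_el_iff D L (by omega) (by omega)).mp hxy
        · exfalso
          simp only [if_neg h1, if_neg (show ¬ i < l' + 1 by omega)] at hj
          split at hj <;> omega
    · intro i j hi hj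
      rw [shape_length] at hi
      rw [shape_getD] at hj
      by_cases h1 : i + 1 < l'
      · simp only [if_pos h1] at hj
        have hv := hv3 i j h1 (by omega)
        simp only [entry_eq, rowStart_shape]
        intro hc
        exact hv ((prec_el_iff D L (by omega) (by omega)).mp hc)
      · by_cases h2 : i + 1 = l'
        · simp only [if_neg h1, if_pos (show i + 1 < l' + 1 by omega)] at hj
          simp only [entry_eq, rowStart_shape]
          rcases (show j = 0 ∨ j = 1 by omega) with rfl | rfl
          · intro hc
            exact (hjun (by omega)).1 ((prec_el_iff D L (by omega) (by omega)).mp hc)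
          · intro hc
            exact (hjun (by omega)).2 ((prec_el_iff D L (by omega) (by omega)).mp hc)
        · by_cases h3 : i + 1 = l' + 1
          · simp only [if_neg h1, if_neg (show ¬ i + 1 < l' + 1 by omega),
              if_pos (show i + 1 < l' + 1 + m by omega)] at hj
            have hv := hjun2 (by omega)
            simp only [entry_eq, rowStart_shape]
            intro hc
            exact hv ((prec_el_iff D L (by omega) (by omega)).mp hc)
          · simp only [if_neg h1, if_neg (show ¬ i + 1 < l' + 1 by omega),
              if_pos (show i + 1 < l' + 1 + m by omega)] at hj
            have hv := hvs (i - l' - 1) (by omega)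
            simp only [entry_eq, rowStart_shape]
            intro hc
            exact hv ((prec_el_iff D L (by omega) (by omega)).mp hc)

end charact

end EPos
namespace EPos

variable {n : ℕ}

lemma el_append_left {xs ys : List ℕ} {p : ℕ} (h : p < xs.length) :
    el (xs ++ ys) p = el xs p := List.getD_append _ _ _ _ h

lemma el_append_right {xs ys : List ℕ} {p : ℕ} (h : xs.length ≤ p) :
    el (xs ++ ys) p = el ys (p - xs.length) := List.getD_append_right _ _ _ _ h

lemma el_cons_zero {a : ℕ} {xs : List ℕ} : el (a :: xs) 0 = a := rfl

lemma el_cons_succ {a : ℕ} {xs : List ℕ} {p : ℕ} : el (a :: xs) (p + 1) = el xs p := rfl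

lemma el_take {xs : List ℕ} {k p : ℕ} (h : p < k) : el (xs.take k) p = el xs p := by
  unfold el
  rw [List.getD_eq_getElem?_getD, List.getD_eq_getElem?_getD, List.getElem?_take]
  simp [h]

lemma el_drop {xs : List ℕ} {k p : ℕ} : el (xs.drop k) p = el xs (k + p) := by
  unfold el
  rw [List.getD_eq_getElem?_getD, List.getD_eq_getElem?_getD, List.getElem?_drop]

lemma el_out_of_range {xs : List ℕ} {p : ℕ} (h : xs.length ≤ p) : el xs p = 0 :=
  List.getD_eq_default _ _ h

lemma el_eraseIdx_lt {xs : List ℕ} {i p : ℕ} (h : p < i) :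
    el (xs.eraseIdx i) p = el xs p := by
  by_cases hp : p < xs.length
  · rw [List.eraseIdx_eq_take_drop_succ]
    rw [el_append_left (by rw [List.length_take]; omega), el_take h]
  · have h1 : (xs.eraseIdx i).length ≤ xs.length := by
      rw [List.length_eraseIdx]; split <;> omega
    rw [el_out_of_range (by omega), el_out_of_range (by omega)]

lemma el_eraseIdx_ge {xs : List ℕ} {i p : ℕ} (hi : i ≤ xs.length) (h : i ≤ p) :
    el (xs.eraseIdx i) p = el xs (p + 1) := by
  rw [List.eraseIdx_eq_take_drop_succ]
  rw [el_append_right (by rw [List.length_take]; omega), el_drop, List.length_take]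
  congr 1
  omega

/-- reconstruction of a list from take/drop with explicit head elements -/
lemma take_drop_decomp {L : List ℕ} {k : ℕ} (h : k < L.length) :
    L = L.take k ++ el L k :: L.drop (k + 1) := by
  rw [el_eq_getElem h, ← List.drop_eq_getElem_cons h, List.take_append_drop]

lemma el_mem_Icc {L : List ℕ} (hperm : L.Perm (List.map (· + 1) (List.range n))) {p : ℕ}
    (hp : p < L.length) : 1 ≤ el L p ∧ el L p ≤ n := by
  have hm : el L p ∈ L := el_mem hp
  have := hperm.mem_iff.mp hm
  simp only [List.mem_map, List.mem_range] at this
  obtain ⟨a, ha, he⟩ := this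
  omega

lemma withMem_length {L : List ℕ} (hperm : L.Perm (List.map (· + 1) (List.range n))) :
    L.length = n := by
  have := hperm.length_eq
  simpa using this

end EPos
namespace EPos

variable {n : ℕ}

/-- reference word 1..n -/
def refL (n : ℕ) : List ℕ := List.map (· + 1) (List.range n)

lemma mem_ptabs_iff {D : DyckPath n} {μ L : List ℕ} :
    L ∈ D.ptabs μ ↔ D.IsPTab μ L := by
  unfold DyckPath.ptabs
  rw [Finset.mem_filter]
  constructor
  · exact fun h => h.2
  · intro h
    exact ⟨List.mem_toFinset.mpr (List.mem_permutations.mpr h.1), h⟩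

/-- the length of the maximal prefix of the tail `Z` all `≺ y` -/
noncomputable def jw (D : DyckPath n) (l : ℕ) (L : List ℕ) : ℕ :=
  Nat.find (⟨(L.drop (3*l+2)).length, Or.inl rfl⟩ :
    ∃ k, k = (L.drop (3*l+2)).length ∨ ¬ D.prec (el (L.drop (3*l+2)) k) (el L (3*l+1)))

lemma jw_le (D : DyckPath n) (l : ℕ) (L : List ℕ) : jw D l L ≤ (L.drop (3*l+2)).length :=
  Nat.find_le (Or.inl rfl)

lemma jw_prefix (D : DyckPath n) (l : ℕ) (L : List ℕ) {k : ℕ} (hk : k < jw D l L) :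
    D.prec (el (L.drop (3*l+2)) k) (el L (3*l+1)) := by
  have := Nat.find_min (⟨(L.drop (3*l+2)).length, Or.inl rfl⟩ :
    ∃ k, k = (L.drop (3*l+2)).length ∨ ¬ D.prec (el (L.drop (3*l+2)) k) (el L (3*l+1))) hk
  push_neg at this
  exact this.2

lemma jw_spec (D : DyckPath n) (l : ℕ) (L : List ℕ) :
    jw D l L = (L.drop (3*l+2)).length ∨ ¬ D.prec (el (L.drop (3*l+2)) (jw D l L)) (el L (3*l+1)) := by
  unfold jw
  exact Nat.find_spec
    (p := fun k => k = (L.drop (3*l+2)).length ∨ ¬ D.prec (el (L.drop (3*l+2)) k) (el L (3*l+1))) _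

/-- the image of a `μ₂`-tableau under the splitting map, a `μ₁`-word -/
noncomputable def phi (D : DyckPath n) (l : ℕ) (L : List ℕ) : List ℕ :=
  L.take (3*l+1) ++ ((L.drop (3*l+2)).take (jw D l L) ++
    el L (3*l+1) :: (L.drop (3*l+2)).drop (jw D l L))

/-- reconstruct a `μ₂`-word from a `μ₁`-word `W` by pulling the `i`-th single up -/
def recon (l : ℕ) (W : List ℕ) (i : ℕ) : List ℕ :=
  W.take (3*l+1) ++ el (W.drop (3*l+1)) i :: (W.drop (3*l+1)).eraseIdx i

def validPos (D : DyckPath n) (l : ℕ) (W : List ℕ) (i : ℕ) : Prop :=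
  recon l W i ∈ D.ptabs (shape l 1 (n - 3*l - 2)) ∧ jw D l (recon l W i) = i

def Bad (D : DyckPath n) (l : ℕ) (L : List ℕ) : Prop :=
  ∃ i, i < jw D l L ∧ validPos D l (phi D l L) i

noncomputable def ii (D : DyckPath n) (l : ℕ) (L : List ℕ) : ℕ :=
  if h : Bad D l L then Nat.find h else 0

noncomputable def uu (D : DyckPath n) (l : ℕ) (L : List ℕ) : ℕ :=
  el (L.drop (3*l+2)) (ii D l L)

noncomputable def psi (D : DyckPath n) (l : ℕ) (L : List ℕ) : List ℕ :=
  L.take (3*l+1) ++ (uu D l L :: el L (3*l+1) :: (L.drop (3*l+2)).eraseIdx (ii D l L))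

lemma ii_spec {D : DyckPath n} {l : ℕ} {L : List ℕ} (h : Bad D l L) :
    ii D l L < jw D l L ∧ validPos D l (phi D l L) (ii D l L) := by
  unfold ii
  rw [dif_pos h]
  exact Nat.find_spec h

section plumbing

variable {D : DyckPath n} {l : ℕ} {L : List ℕ}

lemma decompL (hL : L.length = n) (h2 : 3*l+2 ≤ n) :
    L = L.take (3*l+1) ++ el L (3*l+1) :: L.drop (3*l+2) := by
  have : 3*l+2 = 3*l+1+1 := by omega
  rw [this]
  exact take_drop_decomp (by omega)

lemma length_take_t1 (hL : L.length = n) (h2 : 3*l+2 ≤ n) :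
    (L.take (3*l+1)).length = 3*l+1 := by
  rw [List.length_take]; omega

lemma length_Z (hL : L.length = n) : (L.drop (3*l+2)).length = n - 3*l - 2 := by
  rw [List.length_drop, hL]; omega

lemma el_take_t1 {p : ℕ} (hp : p < 3*l+1) : el (L.take (3*l+1)) p = el L p := el_take hp

lemma el_Z {k : ℕ} : el (L.drop (3*l+2)) k = el L (3*l+2+k) := el_drop

/-- drop of phi -/
lemma drop_phi (hL : L.length = n) (h2 : 3*l+2 ≤ n) :
    (phi D l L).drop (3*l+1) = (L.drop (3*l+2)).take (jw D l L) ++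
      el L (3*l+1) :: (L.drop (3*l+2)).drop (jw D l L) := by
  unfold phi
  exact List.drop_left' (length_take_t1 hL h2)

lemma take_phi (hL : L.length = n) (h2 : 3*l+2 ≤ n) :
    (phi D l L).take (3*l+1) = L.take (3*l+1) := by
  unfold phi
  exact List.take_left' (length_take_t1 hL h2)

lemma length_phi (hL : L.length = n) (h2 : 3*l+2 ≤ n) : (phi D l L).length = n := by
  unfold phi
  have hj := jw_le D l L
  simp only [List.length_append, List.length_take, List.length_cons, List.length_drop,
    List.length_take, hL]
  try omega

lemma el_phi_lo (hL : L.length = n) (h2 : 3*l+2 ≤ n) {p : ℕ} (hp : p < 3*l+1) :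
    el (phi D l L) p = el L p := by
  unfold phi
  rw [el_append_left (by rw [length_take_t1 hL h2]; omega), el_take_t1 hp]

lemma el_phi_mid (hL : L.length = n) (h2 : 3*l+2 ≤ n) {p : ℕ} (hp1 : 3*l+1 ≤ p)
    (hp2 : p < 3*l+1 + jw D l L) :
    el (phi D l L) p = el (L.drop (3*l+2)) (p - 3*l - 1) := by
  unfold phi
  have hj := jw_le D l L
  rw [el_append_right (by rw [length_take_t1 hL h2]; omega)]
  rw [length_take_t1 hL h2]
  rw [el_append_left (by rw [List.length_take]; omega)]
  rw [el_take (by omega)]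
  congr 1 <;> omega

lemma el_phi_y (hL : L.length = n) (h2 : 3*l+2 ≤ n) :
    el (phi D l L) (3*l+1 + jw D l L) = el L (3*l+1) := by
  unfold phi
  have hj := jw_le D l L
  rw [el_append_right (by rw [length_take_t1 hL h2]; omega)]
  rw [length_take_t1 hL h2]
  rw [el_append_right (by rw [List.length_take]; omega)]
  rw [List.length_take]
  have e : 3*l+1 + jw D l L - (3*l+1) - min (jw D l L) (L.drop (3*l+2)).length = 0 := by omega
  rw [e, el_cons_zero]

lemma el_phi_hi (hL : L.length = n) (h2 : 3*l+2 ≤ n) {p : ℕ} (hp1 : 3*l+1 + jw D l L < p) :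
    el (phi D l L) p = el (L.drop (3*l+2)) (p - 3*l - 2) := by
  unfold phi
  have hj := jw_le D l L
  rw [el_append_right (by rw [length_take_t1 hL h2]; omega)]
  rw [length_take_t1 hL h2]
  rw [el_append_right (by rw [List.length_take]; omega)]
  rw [List.length_take]
  have e : p - (3*l+1) - min (jw D l L) (L.drop (3*l+2)).length =
      (p - 3*l - 2 - jw D l L) + 1 := by omega
  rw [e, el_cons_succ, el_drop]
  congr 1 <;> omega

/-- the singles block of `phi L` -/
lemma el_S_lo (hL : L.length = n) (h2 : 3*l+2 ≤ n) {k : ℕ} (hk : k < jw D l L) :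
    el ((phi D l L).drop (3*l+1)) k = el (L.drop (3*l+2)) k := by
  rw [el_drop, el_phi_mid hL h2 (by omega) (by omega)]
  congr 1 <;> omega

lemma el_S_y (hL : L.length = n) (h2 : 3*l+2 ≤ n) :
    el ((phi D l L).drop (3*l+1)) (jw D l L) = el L (3*l+1) := by
  rw [el_drop]
  exact el_phi_y hL h2

lemma el_S_hi (hL : L.length = n) (h2 : 3*l+2 ≤ n) {k : ℕ} (hk : jw D l L < k) :
    el ((phi D l L).drop (3*l+1)) k = el (L.drop (3*l+2)) (k - 1) := by
  rw [el_drop, el_phi_hi hL h2 (by omega)]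
  congr 1 <;> omega

lemma recon_phi_self (hL : L.length = n) (h2 : 3*l+2 ≤ n) :
    recon l (phi D l L) (jw D l L) = L := by
  unfold recon
  rw [take_phi hL h2, drop_phi hL h2]
  have hj := jw_le D l L
  have h1 : el ((L.drop (3*l+2)).take (jw D l L) ++
      el L (3*l+1) :: (L.drop (3*l+2)).drop (jw D l L)) (jw D l L) = el L (3*l+1) := by
    rw [el_append_right (by rw [List.length_take]; omega), List.length_take]
    have e : jw D l L - min (jw D l L) (L.drop (3*l+2)).length = 0 := by omega
    rw [e, el_cons_zero]
  rw [h1]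
  have h2' : ((L.drop (3*l+2)).take (jw D l L) ++
      el L (3*l+1) :: (L.drop (3*l+2)).drop (jw D l L)).eraseIdx (jw D l L) =
      L.drop (3*l+2) := by
    rw [List.eraseIdx_eq_take_drop_succ]
    have e1 : List.take (jw D l L) ((L.drop (3*l+2)).take (jw D l L) ++
        el L (3*l+1) :: (L.drop (3*l+2)).drop (jw D l L)) = (L.drop (3*l+2)).take (jw D l L) := by
      apply List.take_left'
      rw [List.length_take]; omega
    have e2 : List.drop (jw D l L + 1) ((L.drop (3*l+2)).take (jw D l L) ++
        el L (3*l+1) :: (L.drop (3*l+2)).drop (jw D l L)) = (L.drop (3*l+2)).drop (jw D l L) := by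
      rw [List.drop_append]
      rw [List.length_take]
      have e : jw D l L + 1 - min (jw D l L) (L.drop (3*l+2)).length = 1 := by omega
      rw [e]
      have e3 : List.drop (jw D l L + 1) ((L.drop (3*l+2)).take (jw D l L)) = [] :=
        List.drop_eq_nil_of_le (by rw [List.length_take]; omega)
      rw [e3]
      simp
    rw [e1, e2, List.take_append_drop]
  rw [h2']
  exact (decompL hL h2).symm

end plumbing

end EPos
namespace EPos

variable {n : ℕ} {D : DyckPath n} {l : ℕ} {L : List ℕ}

lemma phi_perm (hL : L.length = n) (h2 : 3*l+2 ≤ n) : (phi D l L).Perm L := by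
  have key : ((L.drop (3*l+2)).take (jw D l L) ++
      el L (3*l+1) :: (L.drop (3*l+2)).drop (jw D l L)).Perm
      (el L (3*l+1) :: L.drop (3*l+2)) := by
    have h := List.perm_middle (a := el L (3*l+1)) (l₁ := (L.drop (3*l+2)).take (jw D l L))
      (l₂ := (L.drop (3*l+2)).drop (jw D l L))
    rwa [List.take_append_drop] at h
  have h := key.append_left (L.take (3*l+1))
  rw [← decompL hL h2] at h
  exact h

lemma phi_mem (h2 : 3*l+2 ≤ n) (hm : L ∈ D.ptabs (shape l 1 (n - 3*l - 2))) :
    phi D l L ∈ D.ptabs (shape l 0 (n - 3*l)) := by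
  obtain ⟨hperm, hsum, hr3, hv3, hxy, hjun, hjun2, hvs⟩ :=
    (ptab2_iff D l (n - 3*l - 2) L).mp (mem_ptabs_iff.mp hm)
  have hL : L.length = n := withMem_length hperm
  have hz : (L.drop (3*l+2)).length = n - 3*l - 2 := length_Z hL
  have hj := jw_le D l L
  rw [mem_ptabs_iff, ptab1_iff]
  refine ⟨(phi_perm hL h2).trans hperm, by omega, ?_, ?_, ?_, ?_⟩
  · intro i hi
    have h := hr3 i hi
    rw [show el (phi D l L) (3*i) = el L (3*i) from el_phi_lo hL h2 (by omega),
      show el (phi D l L) (3*i+1) = el L (3*i+1) from el_phi_lo hL h2 (by omega),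
      show el (phi D l L) (3*i+2) = el L (3*i+2) from el_phi_lo hL h2 (by omega)]
    exact h
  · intro i j h1 h3
    have h := hv3 i j h1 h3
    rw [show el (phi D l L) (3*(i+1)+j) = el L (3*(i+1)+j) from el_phi_lo hL h2 (by omega),
      show el (phi D l L) (3*i+j) = el L (3*i+j) from el_phi_lo hL h2 (by omega)]
    exact h
  · intro hl1 hm1
    rw [show el (phi D l L) (3*l) = el L (3*l) from el_phi_lo hL h2 (by omega),
      show el (phi D l L) (3*l-3) = el L (3*l-3) from el_phi_lo hL h2 (by omega)]
    exact (hjun hl1).1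
  · intro kk hkk
    by_cases hk0 : kk = 0
    · subst hk0
      rw [show el (phi D l L) (3*l+0) = el L (3*l) from el_phi_lo hL h2 (by omega)]
      by_cases hjj : jw D l L = 0
      · have e : el (phi D l L) (3*l+0+1) = el L (3*l+1) := by
          have := el_phi_y (D := D) (l := l) hL h2
          rw [hjj] at this
          simpa using this
        rw [e]
        have hx := el_mem_Icc hperm (p := 3*l) (by omega)
        exact prec_asymm D hx.1 hx.2 hxy
      · have e : el (phi D l L) (3*l+0+1) = el (L.drop (3*l+2)) 0 := by
          rw [el_phi_mid hL h2 (by omega) (by omega)]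
          congr 1
          omega
        rw [e, el_Z]
        have := hjun2 (by omega)
        simpa using this
    · -- kk ≥ 1
      by_cases hc1 : 3*l+kk+1 < 3*l+1 + jw D l L
      · have g1 : el (phi D l L) (3*l+kk+1) = el L (3*l+2+(kk-1)+1) := by
          rw [el_phi_mid hL h2 (by omega) (by omega), el_Z]
          congr 1
          omega
        have g2 : el (phi D l L) (3*l+kk) = el L (3*l+2+(kk-1)) := by
          rw [el_phi_mid hL h2 (by omega) (by omega), el_Z]
          congr 1
          omega
        rw [g1, g2]
        exact hvs (kk-1) (by omega)
      · by_cases hc2 : 3*l+kk+1 = 3*l+1 + jw D l L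
        · -- upper entry is y, lower is Z[jj - 1]
          have g2 : el (phi D l L) (3*l+kk) = el (L.drop (3*l+2)) (kk-1) := by
            rw [el_phi_mid hL h2 (by omega) (by omega)]
            congr 1
            omega
          rw [show (3*l+kk+1 : ℕ) = 3*l+1 + jw D l L from hc2, el_phi_y hL h2, g2]
          have hpre := jw_prefix D l L (k := kk-1) (by omega)
          have hb : 1 ≤ el (L.drop (3*l+2)) (kk-1) ∧ el (L.drop (3*l+2)) (kk-1) ≤ n := by
            rw [el_Z]
            exact el_mem_Icc hperm (by omega)
          exact prec_asymm D hb.1 hb.2 hpre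
        · by_cases hc3 : 3*l+kk = 3*l+1 + jw D l L
          · -- upper entry is Z[jj], lower is y
            have g1 : el (phi D l L) (3*l+kk+1) = el (L.drop (3*l+2)) (jw D l L) := by
              rw [el_phi_hi hL h2 (by omega)]
              congr 1
              omega
            rw [g1, show (3*l+kk : ℕ) = 3*l+1 + jw D l L from hc3, el_phi_y hL h2]
            rcases jw_spec D l L with hs | hs
            · omega
            · exact hs
          · -- both high
            have g1 : el (phi D l L) (3*l+kk+1) = el L (3*l+2+(kk-2)+1) := by
              rw [el_phi_hi hL h2 (by omega), el_Z]
              congr 1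
              omega
            have g2 : el (phi D l L) (3*l+kk) = el L (3*l+2+(kk-2)) := by
              rw [el_phi_hi hL h2 (by omega), el_Z]
              congr 1
              omega
            rw [g1, g2]
            exact hvs (kk-2) (by omega)
  
end EPos
namespace EPos

variable {n : ℕ} {D : DyckPath n} {l : ℕ} {L W : List ℕ}

section reconlemmas

lemma length_take_W (hW : W.length = n) (h2 : 3*l+2 ≤ n) :
    (W.take (3*l+1)).length = 3*l+1 := by
  rw [List.length_take]; omega

lemma el_recon_lo (hW : W.length = n) (h2 : 3*l+2 ≤ n) {i p : ℕ} (hp : p < 3*l+1) :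
    el (recon l W i) p = el W p := by
  unfold recon
  rw [el_append_left (by rw [length_take_W hW h2]; omega), el_take hp]

lemma el_recon_u (hW : W.length = n) (h2 : 3*l+2 ≤ n) {i : ℕ} :
    el (recon l W i) (3*l+1) = el (W.drop (3*l+1)) i := by
  unfold recon
  rw [el_append_right (by rw [length_take_W hW h2]), length_take_W hW h2]
  simp only [Nat.sub_self]
  rfl

lemma drop_recon (hW : W.length = n) (h2 : 3*l+2 ≤ n) {i : ℕ} :
    (recon l W i).drop (3*l+2) = (W.drop (3*l+1)).eraseIdx i := by
  unfold recon
  rw [List.drop_append, length_take_W hW h2]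
  have e1 : List.drop (3*l+2) (W.take (3*l+1)) = [] :=
    List.drop_eq_nil_of_le (by rw [length_take_W hW h2]; omega)
  rw [e1]
  have e2 : 3*l+2 - (3*l+1) = 1 := by omega
  rw [e2]
  simp

end reconlemmas

section badfacts

variable (h2 : 3*l+2 ≤ n) (hm : L ∈ D.ptabs (shape l 1 (n - 3*l - 2))) (hB : Bad D l L)
include h2 hm hB

lemma bad_nZ : 1 ≤ n - 3*l - 2 := by
  have hperm := (mem_ptabs_iff.mp hm).1
  have hL : L.length = n := withMem_length hperm
  have hz : (L.drop (3*l+2)).length = n - 3*l - 2 := length_Z hL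
  have hii := (ii_spec hB).1
  have hj := jw_le D l L
  omega

lemma bad_uu_eq : uu D l L = el ((phi D l L).drop (3*l+1)) (ii D l L) := by
  have hperm := (mem_ptabs_iff.mp hm).1
  have hL : L.length = n := withMem_length hperm
  have hii := (ii_spec hB).1
  rw [el_S_lo hL h2 hii]
  rfl

/-- the reconstructed tableau is a μ₂ tableau whose pair row is (x, uu) -/
lemma bad_recon_mem : recon l (phi D l L) (ii D l L) ∈ D.ptabs (shape l 1 (n - 3*l - 2)) :=
  ((ii_spec hB).2).1

lemma bad_ux : D.prec (el L (3*l)) (uu D l L) := by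
  have hperm := (mem_ptabs_iff.mp hm).1
  have hL : L.length = n := withMem_length hperm
  have hW : (phi D l L).length = n := length_phi hL h2
  obtain ⟨hpermR, hsumR, hr3R, hv3R, hxyR, hjunR, hjun2R, hvsR⟩ :=
    (ptab2_iff D l (n - 3*l - 2) _).mp (mem_ptabs_iff.mp (bad_recon_mem h2 hm hB))
  have e1 : el (recon l (phi D l L) (ii D l L)) (3*l) = el L (3*l) := by
    rw [el_recon_lo hW h2 (by omega), el_phi_lo hL h2 (by omega)]
  have e2 : el (recon l (phi D l L) (ii D l L)) (3*l+1) = uu D l L := by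
    rw [el_recon_u hW h2, ← bad_uu_eq h2 hm hB]
  rw [e1, e2] at hxyR
  exact hxyR

lemma bad_uvert (hl1 : 1 ≤ l) : ¬ D.prec (uu D l L) (el L (3*l-2)) := by
  have hperm := (mem_ptabs_iff.mp hm).1
  have hL : L.length = n := withMem_length hperm
  have hW : (phi D l L).length = n := length_phi hL h2
  obtain ⟨hpermR, hsumR, hr3R, hv3R, hxyR, hjunR, hjun2R, hvsR⟩ :=
    (ptab2_iff D l (n - 3*l - 2) _).mp (mem_ptabs_iff.mp (bad_recon_mem h2 hm hB))
  have e1 : el (recon l (phi D l L) (ii D l L)) (3*l-2) = el L (3*l-2) := by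
    rw [el_recon_lo hW h2 (by omega), el_phi_lo hL h2 (by omega)]
  have e2 : el (recon l (phi D l L) (ii D l L)) (3*l+1) = uu D l L := by
    rw [el_recon_u hW h2, ← bad_uu_eq h2 hm hB]
  have h := (hjunR hl1).2
  rw [e1, e2] at h
  exact h

lemma bad_uy : D.prec (uu D l L) (el L (3*l+1)) :=
  jw_prefix D l L (ii_spec hB).1

lemma bad_C1 {k : ℕ} (hk : k < ii D l L) :
    D.prec (el (L.drop (3*l+2)) k) (uu D l L) := by
  have hperm := (mem_ptabs_iff.mp hm).1
  have hL : L.length = n := withMem_length hperm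
  have hW : (phi D l L).length = n := length_phi hL h2
  have hii := (ii_spec hB).1
  have hjR := ((ii_spec hB).2).2
  have h := jw_prefix D l (recon l (phi D l L) (ii D l L)) (k := k) (by omega)
  rw [drop_recon hW h2, el_recon_u hW h2, ← bad_uu_eq h2 hm hB] at h
  rw [el_eraseIdx_lt hk, el_S_lo hL h2 (by omega)] at h
  exact h

lemma bad_C2 (hii1 : ii D l L + 1 < n - 3*l - 2) :
    ¬ D.prec (el (L.drop (3*l+2)) (ii D l L + 1)) (uu D l L) ∨
    ¬ D.prec (el (L.drop (3*l+2)) (ii D l L + 1)) (el L (3*l+1)) := by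
  have hperm := (mem_ptabs_iff.mp hm).1
  have hL : L.length = n := withMem_length hperm
  have hz : (L.drop (3*l+2)).length = n - 3*l - 2 := length_Z hL
  have hW : (phi D l L).length = n := length_phi hL h2
  have hii := (ii_spec hB).1
  have hj := jw_le D l L
  have hjR := ((ii_spec hB).2).2
  by_cases hc : ii D l L + 1 < jw D l L
  · left
    rcases jw_spec D l (recon l (phi D l L) (ii D l L)) with hs | hs
    · exfalso
      rw [hjR, drop_recon hW h2] at hs
      rw [List.length_eraseIdx] at hs
      have hlenS : ((phi D l L).drop (3*l+1)).length = n - 3*l - 1 := by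
        rw [List.length_drop, hW]; omega
      rw [hlenS] at hs
      split at hs <;> omega
    · rw [hjR, drop_recon hW h2, el_recon_u hW h2, ← bad_uu_eq h2 hm hB] at hs
      have hlenS : ((phi D l L).drop (3*l+1)).length = n - 3*l - 1 := by
        rw [List.length_drop, hW]; omega
      rw [el_eraseIdx_ge (by omega) (le_refl _)] at hs
      rw [el_S_lo hL h2 hc] at hs
      exact hs
  · right
    have hc2 : ii D l L + 1 = jw D l L := by omega
    rcases jw_spec D l L with hs | hs
    · omega
    · rw [← hc2] at hs
      exact hs

end badfacts

lemma psi_perm (h2 : 3*l+2 ≤ n) (hm : L ∈ D.ptabs (shape l 1 (n - 3*l - 2)))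
    (hB : Bad D l L) : (psi D l L).Perm L := by
  have hperm := (mem_ptabs_iff.mp hm).1
  have hL : L.length = n := withMem_length hperm
  have hz : (L.drop (3*l+2)).length = n - 3*l - 2 := length_Z hL
  have hii := (ii_spec hB).1
  have hj := jw_le D l L
  have hZdec : L.drop (3*l+2) = (L.drop (3*l+2)).take (ii D l L) ++
      uu D l L :: (L.drop (3*l+2)).drop (ii D l L + 1) := take_drop_decomp (by omega)
  have h1 : (L.drop (3*l+2)).Perm (uu D l L :: (L.drop (3*l+2)).eraseIdx (ii D l L)) := by
    rw [List.eraseIdx_eq_take_drop_succ]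
    nth_rewrite 1 [hZdec]
    exact List.perm_middle
  have h2' : (el L (3*l+1) :: L.drop (3*l+2)).Perm
      (uu D l L :: el L (3*l+1) :: (L.drop (3*l+2)).eraseIdx (ii D l L)) := by
    refine List.Perm.trans (List.Perm.cons _ h1) ?_
    exact List.Perm.swap _ _ _
  have h3 := h2'.append_left (L.take (3*l+1))
  rw [← decompL hL h2] at h3
  unfold psi
  exact h3.symm
  
lemma psi_mem (h3 : D.BounceThree) (h2 : 3*l+2 ≤ n)
    (hm : L ∈ D.ptabs (shape l 1 (n - 3*l - 2))) (hB : Bad D l L) :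
    psi D l L ∈ D.ptabs (shape (l+1) 0 (n - 3*l - 3)) := by
  obtain ⟨hperm, hsum, hr3, hv3, hxy, hjun, hjun2, hvs⟩ :=
    (ptab2_iff D l (n - 3*l - 2) L).mp (mem_ptabs_iff.mp hm)
  have hL : L.length = n := withMem_length hperm
  have hz : (L.drop (3*l+2)).length = n - 3*l - 2 := length_Z hL
  have hii := (ii_spec hB).1
  have hj := jw_le D l L
  have hn3 : 3*l+3 ≤ n := by omega
  have hzE : ((L.drop (3*l+2)).eraseIdx (ii D l L)).length = n - 3*l - 3 := by
    rw [List.length_eraseIdx]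
    split <;> omega
  -- el computations on psi
  have elo : ∀ p < 3*l+1, el (psi D l L) p = el L p := by
    intro p hp
    unfold psi
    rw [el_append_left (by rw [length_take_t1 hL h2]; omega), el_take_t1 hp]
  have eu : el (psi D l L) (3*l+1) = uu D l L := by
    unfold psi
    rw [el_append_right (by rw [length_take_t1 hL h2]), length_take_t1 hL h2]
    simp only [Nat.sub_self]
    rfl
  have ey : el (psi D l L) (3*l+2) = el L (3*l+1) := by
    unfold psi
    rw [el_append_right (by rw [length_take_t1 hL h2]; omega), length_take_t1 hL h2]
    have e : 3*l+2 - (3*l+1) = 1 := by omega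
    rw [e]
    rfl
  have ehi : ∀ p, 3*l+3 ≤ p → el (psi D l L) p =
      el ((L.drop (3*l+2)).eraseIdx (ii D l L)) (p - 3*l - 3) := by
    intro p hp
    unfold psi
    rw [el_append_right (by rw [length_take_t1 hL h2]; omega), length_take_t1 hL h2]
    have e : p - (3*l+1) = (p - 3*l - 3) + 1 + 1 := by omega
    rw [e, el_cons_succ, el_cons_succ]
  -- bounds
  have bx := el_mem_Icc hperm (p := 3*l) (by omega)
  have by' := el_mem_Icc hperm (p := 3*l+1) (by omega)
  have bu : 1 ≤ uu D l L ∧ uu D l L ≤ n := by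
    unfold uu
    rw [el_Z]
    exact el_mem_Icc hperm (by omega)
  have hux := bad_ux h2 hm hB
  have huy := bad_uy h2 hm hB
  rw [mem_ptabs_iff, ptab1_iff]
  refine ⟨(psi_perm h2 hm hB).trans hperm, by omega, ?_, ?_, ?_, ?_⟩
  · -- rows3 at l+1
    intro i hi
    by_cases hil : i < l
    · rw [show el (psi D l L) (3*i) = el L (3*i) from elo _ (by omega),
        show el (psi D l L) (3*i+1) = el L (3*i+1) from elo _ (by omega),
        show el (psi D l L) (3*i+2) = el L (3*i+2) from elo _ (by omega)]
      exact hr3 i hil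
    · have e0 : (3*i : ℕ) = 3*l := by omega
      rw [e0]
      rw [show el (psi D l L) (3*l) = el L (3*l) from elo _ (by omega), eu, ey]
      exact ⟨hux, huy⟩
  · -- vert3 at l+1
    intro i j h1 hj3
    by_cases hil : i + 1 < l
    · rw [show el (psi D l L) (3*(i+1)+j) = el L (3*(i+1)+j) from elo _ (by omega),
        show el (psi D l L) (3*i+j) = el L (3*i+j) from elo _ (by omega)]
      exact hv3 i j hil hj3
    · have hieq : i + 1 = l := by omega
      rw [show el (psi D l L) (3*i+j) = el L (3*i+j) from elo _ (by omega)]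
      rcases (show j = 0 ∨ j = 1 ∨ j = 2 by omega) with rfl | rfl | rfl
      · rw [show el (psi D l L) (3*(i+1)+0) = el L (3*l) from by
          rw [show 3*(i+1)+0 = 3*l from by omega]; exact elo _ (by omega)]
        have := (hjun (by omega)).1
        rw [show (3*l-3 : ℕ) = 3*i+0 from by omega] at this
        exact this
      · rw [show el (psi D l L) (3*(i+1)+1) = uu D l L from by
          rw [show 3*(i+1)+1 = 3*l+1 from by omega]; exact eu]
        have := bad_uvert h2 hm hB (by omega)
        rw [show (3*l-2 : ℕ) = 3*i+1 from by omega] at this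
        exact this
      · rw [show el (psi D l L) (3*(i+1)+2) = el L (3*l+1) from by
          rw [show 3*(i+1)+2 = 3*l+2 from by omega]; exact ey]
        have bw := el_mem_Icc hperm (p := 3*i+2) (by omega)
        exact nprec_of_chain D h3 bx.1 bx.2 bu.2 by'.2 bw.2 hux huy
  · -- junction between row l (the triple) and the first single
    intro _ hm1
    rw [show el (psi D l L) (3*(l+1)) = el ((L.drop (3*l+2)).eraseIdx (ii D l L)) 0 from by
      rw [ehi _ (by omega)]; congr 1; omega]
    rw [show el (psi D l L) (3*(l+1)-3) = el L (3*l) from by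
      rw [show (3*(l+1)-3 : ℕ) = 3*l from by omega]; exact elo _ (by omega)]
    by_cases hi0 : ii D l L = 0
    · rw [el_eraseIdx_ge (by omega) (by omega)]
      have h01 := hvs 0 (by omega)
      have hzz : el (L.drop (3*l+2)) 0 = uu D l L := by
        unfold uu
        rw [hi0]
      rw [el_Z] at hzz
      rw [el_Z]
      rw [show (3*l+2+(0+1) : ℕ) = 3*l+2+0+1 from by omega]
      exact nprec_of_nprec_prec D bx.1 bx.2 (hzz ▸ h01) hux
    · rw [el_eraseIdx_lt (by omega)]
      have := hjun2 (by omega)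
      rw [el_Z]
      rw [show (3*l+2+0 : ℕ) = 3*l+2 from by omega]
      exact this
  · -- singles chain
    intro kk hkk
    rw [show el (psi D l L) (3*(l+1)+kk+1) =
        el ((L.drop (3*l+2)).eraseIdx (ii D l L)) (kk+1) from by
      rw [ehi _ (by omega)]; congr 1; omega]
    rw [show el (psi D l L) (3*(l+1)+kk) =
        el ((L.drop (3*l+2)).eraseIdx (ii D l L)) kk from by
      rw [ehi _ (by omega)]; congr 1; omega]
    by_cases hc1 : kk + 1 < ii D l L
    · rw [el_eraseIdx_lt (by omega), el_eraseIdx_lt (by omega)]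
      have := hvs kk (by omega)
      rw [el_Z, el_Z]
      rw [show (3*l+2+(kk+1) : ℕ) = 3*l+2+kk+1 from by omega]
      exact this
    · by_cases hc2 : kk + 1 = ii D l L
      · rw [el_eraseIdx_ge (p := kk+1) (by omega) (by omega),
          el_eraseIdx_lt (p := kk) (by omega)]
        have hv := hvs (kk+1) (by omega)
        have hzz : el (L.drop (3*l+2)) (kk+1) = uu D l L := by
          unfold uu
          rw [hc2]
        have hC1 := bad_C1 h2 hm hB (k := kk) (by omega)
        have bzk : 1 ≤ el (L.drop (3*l+2)) kk ∧ el (L.drop (3*l+2)) kk ≤ n := by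
          rw [el_Z]
          exact el_mem_Icc hperm (by omega)
        refine nprec_of_nprec_prec D bzk.1 bzk.2 ?_ hC1
        rw [el_Z] at hzz
        rw [el_Z]
        rw [show (3*l+2+(kk+1+1) : ℕ) = 3*l+2+(kk+1)+1 from by omega]
        rw [hzz] at hv
        exact hv
      · rw [el_eraseIdx_ge (by omega) (by omega), el_eraseIdx_ge (by omega) (by omega)]
        have := hvs (kk+1) (by omega)
        rw [el_Z, el_Z]
        rw [show (3*l+2+(kk+1+1) : ℕ) = 3*l+2+(kk+1)+1 from by omega]
        exact this

end EPos
namespace EPos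

variable {n : ℕ} {D : DyckPath n} {l : ℕ} {L L1 L2 : List ℕ}

lemma validPos_self (h2 : 3*l+2 ≤ n) (hm : L ∈ D.ptabs (shape l 1 (n - 3*l - 2))) :
    validPos D l (phi D l L) (jw D l L) := by
  have hL : L.length = n := withMem_length (mem_ptabs_iff.mp hm).1
  constructor
  · rw [recon_phi_self hL h2]
    exact hm
  · rw [recon_phi_self hL h2]

lemma good_inj (h2 : 3*l+2 ≤ n) (hm1 : L1 ∈ D.ptabs (shape l 1 (n - 3*l - 2)))
    (hm2 : L2 ∈ D.ptabs (shape l 1 (n - 3*l - 2))) (hg1 : ¬ Bad D l L1)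
    (hg2 : ¬ Bad D l L2) (heq : phi D l L1 = phi D l L2) : L1 = L2 := by
  have hL1 : L1.length = n := withMem_length (mem_ptabs_iff.mp hm1).1
  have hL2 : L2.length = n := withMem_length (mem_ptabs_iff.mp hm2).1
  have v1 := validPos_self h2 hm1
  have v2 := validPos_self h2 hm2
  have hjeq : jw D l L1 = jw D l L2 := by
    by_contra hne
    rcases Nat.lt_or_ge (jw D l L1) (jw D l L2) with hlt | hge
    · exact hg2 ⟨jw D l L1, hlt, heq ▸ v1⟩
    · have hlt : jw D l L2 < jw D l L1 := by omega
      exact hg1 ⟨jw D l L2, hlt, heq.symm ▸ v2⟩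
  calc L1 = recon l (phi D l L1) (jw D l L1) := (recon_phi_self hL1 h2).symm
    _ = recon l (phi D l L2) (jw D l L2) := by rw [heq, hjeq]
    _ = L2 := recon_phi_self hL2 h2

section psicomp

lemma take_psi (hL : L.length = n) (h2 : 3*l+2 ≤ n) :
    (psi D l L).take (3*l+1) = L.take (3*l+1) := by
  unfold psi
  exact List.take_left' (length_take_t1 hL h2)

lemma el_psi_u (hL : L.length = n) (h2 : 3*l+2 ≤ n) :
    el (psi D l L) (3*l+1) = uu D l L := by
  unfold psi
  rw [el_append_right (by rw [length_take_t1 hL h2]), length_take_t1 hL h2]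
  simp only [Nat.sub_self]
  rfl

lemma el_psi_yy (hL : L.length = n) (h2 : 3*l+2 ≤ n) :
    el (psi D l L) (3*l+2) = el L (3*l+1) := by
  unfold psi
  rw [el_append_right (by rw [length_take_t1 hL h2]; omega), length_take_t1 hL h2]
  rw [show (3*l+2) - (3*l+1) = 1 from by omega]
  rfl

lemma drop_psi (hL : L.length = n) (h2 : 3*l+2 ≤ n) :
    (psi D l L).drop (3*l+3) = (L.drop (3*l+2)).eraseIdx (ii D l L) := by
  unfold psi
  rw [List.drop_append, length_take_t1 hL h2]
  have e1 : List.drop (3*l+3) (L.take (3*l+1)) = [] :=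
    List.drop_eq_nil_of_le (by rw [length_take_t1 hL h2]; omega)
  rw [e1, show (3*l+3) - (3*l+1) = 2 from by omega]
  simp

end psicomp

lemma bad_not_lt (h2 : 3*l+2 ≤ n) (hm1 : L1 ∈ D.ptabs (shape l 1 (n - 3*l - 2)))
    (hm2 : L2 ∈ D.ptabs (shape l 1 (n - 3*l - 2))) (hb1 : Bad D l L1) (hb2 : Bad D l L2)
    (heq : psi D l L1 = psi D l L2) : ¬ (ii D l L1 < ii D l L2) := by
  intro hlt
  have hperm1 := (mem_ptabs_iff.mp hm1).1
  have hperm2 := (mem_ptabs_iff.mp hm2).1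
  have hL1 : L1.length = n := withMem_length hperm1
  have hL2 : L2.length = n := withMem_length hperm2
  have hz1 : (L1.drop (3*l+2)).length = n - 3*l - 2 := length_Z hL1
  have hz2 : (L2.drop (3*l+2)).length = n - 3*l - 2 := length_Z hL2
  have hii1 := (ii_spec hb1).1
  have hii2 := (ii_spec hb2).1
  have hj1 := jw_le D l L1
  have hj2 := jw_le D l L2
  -- common pieces
  have hu : uu D l L1 = uu D l L2 := by
    rw [← el_psi_u hL1 h2, ← el_psi_u hL2 h2, heq]
  have hy : el L1 (3*l+1) = el L2 (3*l+1) := by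
    rw [← el_psi_yy hL1 h2, ← el_psi_yy hL2 h2, heq]
  have hT : (L1.drop (3*l+2)).eraseIdx (ii D l L1) = (L2.drop (3*l+2)).eraseIdx (ii D l L2) := by
    rw [← drop_psi hL1 h2, ← drop_psi hL2 h2, heq]
  -- C1 of L2 at index ii L1 yields prec (el T i1) u
  have hC1 : D.prec (el ((L2.drop (3*l+2)).eraseIdx (ii D l L2)) (ii D l L1)) (uu D l L2) := by
    rw [el_eraseIdx_lt hlt]
    exact bad_C1 h2 hm2 hb2 hlt
  -- C2 of L1
  have hrange : ii D l L1 + 1 < n - 3*l - 2 := by omega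
  have hC2 := bad_C2 h2 hm1 hb1 hrange
  have heT : el ((L1.drop (3*l+2)).eraseIdx (ii D l L1)) (ii D l L1) =
      el (L1.drop (3*l+2)) (ii D l L1 + 1) :=
    el_eraseIdx_ge (by omega) (le_refl _)
  rw [← heT, hT] at hC2
  have hbT : 1 ≤ el ((L2.drop (3*l+2)).eraseIdx (ii D l L2)) (ii D l L1) ∧
      el ((L2.drop (3*l+2)).eraseIdx (ii D l L2)) (ii D l L1) ≤ n := by
    rw [el_eraseIdx_lt hlt, el_Z]
    exact el_mem_Icc hperm2 (by omega)
  have hbu : 1 ≤ uu D l L2 ∧ uu D l L2 ≤ n := by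
    unfold uu
    rw [el_Z]
    exact el_mem_Icc hperm2 (by omega)
  rcases hC2 with hC2 | hC2
  · rw [hu] at hC2
    exact hC2 hC1
  · rw [hy] at hC2
    have huy2 := bad_uy h2 hm2 hb2
    exact hC2 (prec_trans D hbu.1 hbu.2 hC1 huy2)

lemma bad_inj (h2 : 3*l+2 ≤ n) (hm1 : L1 ∈ D.ptabs (shape l 1 (n - 3*l - 2)))
    (hm2 : L2 ∈ D.ptabs (shape l 1 (n - 3*l - 2))) (hb1 : Bad D l L1) (hb2 : Bad D l L2)
    (heq : psi D l L1 = psi D l L2) : L1 = L2 := by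
  have hperm1 := (mem_ptabs_iff.mp hm1).1
  have hperm2 := (mem_ptabs_iff.mp hm2).1
  have hL1 : L1.length = n := withMem_length hperm1
  have hL2 : L2.length = n := withMem_length hperm2
  have hz1 : (L1.drop (3*l+2)).length = n - 3*l - 2 := length_Z hL1
  have hz2 : (L2.drop (3*l+2)).length = n - 3*l - 2 := length_Z hL2
  have hii1 := (ii_spec hb1).1
  have hii2 := (ii_spec hb2).1
  have hj1 := jw_le D l L1
  have hj2 := jw_le D l L2
  have hieq : ii D l L1 = ii D l L2 := by
    have n1 := bad_not_lt h2 hm1 hm2 hb1 hb2 heq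
    have n2 := bad_not_lt h2 hm2 hm1 hb2 hb1 heq.symm
    omega
  have hu : uu D l L1 = uu D l L2 := by
    rw [← el_psi_u hL1 h2, ← el_psi_u hL2 h2, heq]
  have hy : el L1 (3*l+1) = el L2 (3*l+1) := by
    rw [← el_psi_yy hL1 h2, ← el_psi_yy hL2 h2, heq]
  have hT : (L1.drop (3*l+2)).eraseIdx (ii D l L1) = (L2.drop (3*l+2)).eraseIdx (ii D l L2) := by
    rw [← drop_psi hL1 h2, ← drop_psi hL2 h2, heq]
  have htk : L1.take (3*l+1) = L2.take (3*l+1) := by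
    rw [← take_psi hL1 h2, ← take_psi hL2 h2, heq]
  -- recover Z from T, i, u
  have hZrec : ∀ (L' : List ℕ), L'.length = n → ii D l L' < (L'.drop (3*l+2)).length →
      L'.drop (3*l+2) = ((L'.drop (3*l+2)).eraseIdx (ii D l L')).take (ii D l L') ++
        uu D l L' :: ((L'.drop (3*l+2)).eraseIdx (ii D l L')).drop (ii D l L') := by
    intro L' hL' hiz
    have hdec : L'.drop (3*l+2) = (L'.drop (3*l+2)).take (ii D l L') ++
        uu D l L' :: (L'.drop (3*l+2)).drop (ii D l L' + 1) := take_drop_decomp hiz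
    rw [List.eraseIdx_eq_take_drop_succ]
    have e1 : ((L'.drop (3*l+2)).take (ii D l L') ++
        (L'.drop (3*l+2)).drop (ii D l L' + 1)).take (ii D l L') =
        (L'.drop (3*l+2)).take (ii D l L') :=
      List.take_left' (by rw [List.length_take]; omega)
    have e2 : ((L'.drop (3*l+2)).take (ii D l L') ++
        (L'.drop (3*l+2)).drop (ii D l L' + 1)).drop (ii D l L') =
        (L'.drop (3*l+2)).drop (ii D l L' + 1) :=
      List.drop_left' (by rw [List.length_take]; omega)
    rw [e1, e2]
    exact hdec
  have hZ : L1.drop (3*l+2) = L2.drop (3*l+2) := by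
    rw [hZrec L1 hL1 (by omega), hZrec L2 hL2 (by omega), hT, hu, hieq]
  calc L1 = L1.take (3*l+1) ++ el L1 (3*l+1) :: L1.drop (3*l+2) := decompL hL1 h2
    _ = L2.take (3*l+1) ++ el L2 (3*l+1) :: L2.drop (3*l+2) := by rw [htk, hy, hZ]
    _ = L2 := (decompL hL2 h2).symm

end EPos
namespace EPos

variable {n : ℕ} {D : DyckPath n} {l : ℕ} {L : List ℕ}

/-- position map for the splitting map -/
noncomputable def gphi (D : DyckPath n) (l : ℕ) (L : List ℕ) : ℕ → ℕ := fun p =>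
  if p ≤ 3*l then p else if p = 3*l+1 then 3*l+1 + jw D l L
  else if p < 3*l+2 + jw D l L then p - 1 else p

noncomputable def gphi' (D : DyckPath n) (l : ℕ) (L : List ℕ) : ℕ → ℕ := fun p =>
  if p ≤ 3*l then p else if p < 3*l+1 + jw D l L then p + 1
  else if p = 3*l+1 + jw D l L then 3*l+1 else p

lemma el_psi_lo (hL : L.length = n) (h2 : 3*l+2 ≤ n) {p : ℕ} (hp : p < 3*l+1) :
    el (psi D l L) p = el L p := by
  unfold psi
  rw [el_append_left (by rw [length_take_t1 hL h2]; omega), el_take_t1 hp]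

lemma el_psi_hi (hL : L.length = n) (h2 : 3*l+2 ≤ n) {p : ℕ} (hp : 3*l+3 ≤ p) :
    el (psi D l L) p = el ((L.drop (3*l+2)).eraseIdx (ii D l L)) (p - 3*l - 3) := by
  unfold psi
  rw [el_append_right (by rw [length_take_t1 hL h2]; omega), length_take_t1 hL h2]
  rw [show p - (3*l+1) = (p - 3*l - 3) + 1 + 1 from by omega, el_cons_succ, el_cons_succ]

/-- position map for the extend-to-triple map -/
noncomputable def gpsi (D : DyckPath n) (l : ℕ) (L : List ℕ) : ℕ → ℕ := fun p =>
  if p ≤ 3*l then p else if p = 3*l+1 then 3*l+2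
  else if p = 3*l+2 + ii D l L then 3*l+1
  else if p < 3*l+2 + ii D l L then p + 1 else p

noncomputable def gpsi' (D : DyckPath n) (l : ℕ) (L : List ℕ) : ℕ → ℕ := fun p =>
  if p ≤ 3*l then p else if p = 3*l+1 then 3*l+2 + ii D l L
  else if p = 3*l+2 then 3*l+1
  else if p ≤ 3*l+2 + ii D l L then p - 1 else p

lemma r2_eval (h2 : 3*l+2 ≤ n) : ∀ p, p < n → rowIdx (shape l 1 (n - 3*l - 2)) p =
    if p < 3*l then p/3 else if p < 3*l+2 then l else l + (p - 3*l - 1) := by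
  intro p hp
  split_ifs with c1 c2
  · exact rowIdx_shape_lo c1
  · rw [rowIdx_shape_mid (by omega) (by omega)]
  · rw [rowIdx_shape_hi (jj := 1) (by omega) (by omega)]
    omega

set_option maxHeartbeats 3200000 in
lemma inv_phi (h2 : 3*l+2 ≤ n) (hm : L ∈ D.ptabs (shape l 1 (n - 3*l - 2))) :
    D.invNum (shape l 0 (n - 3*l)) (phi D l L) = D.invNum (shape l 1 (n - 3*l - 2)) L := by
  obtain ⟨hperm, hsum, hr3, hv3, hxy, hjun, hjun2, hvs⟩ :=
    (ptab2_iff D l (n - 3*l - 2) L).mp (mem_ptabs_iff.mp hm)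
  have hL : L.length = n := withMem_length hperm
  have hz : (L.drop (3*l+2)).length = n - 3*l - 2 := length_Z hL
  have hj := jw_le D l L
  have hjn : 3*l + 1 + jw D l L < n := by omega
  have r1 : ∀ p, p < n → rowIdx (shape l 0 (n - 3*l)) p =
      if p < 3*l then p/3 else l + (p - 3*l) := by
    intro p hp
    split_ifs with c1
    · exact rowIdx_shape_lo c1
    · rw [rowIdx_shape_hi (jj := 0) (by omega) (by omega)]
      omega
  have hgo : ∀ p, p < n → gphi D l L p < n := by
    intro p hp
    simp only [gphi]
    split_ifs <;> omega
  have rg : ∀ p, p < n → rowIdx (shape l 0 (n - 3*l)) (gphi D l L p) =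
      if p < 3*l then p/3 else if p = 3*l then l else if p = 3*l+1 then l + (jw D l L + 1)
      else if p < 3*l+2 + jw D l L then l + (p - 3*l - 1) else l + (p - 3*l) := by
    intro p hp
    rw [r1 _ (hgo p hp)]
    simp only [gphi]
    split_ifs <;> omega
  rw [invNum_eq_posInv, invNum_eq_posInv]
  refine (posInv_eq_of_rearrange D (N := n) (by rw [shape_sum]; omega) (by rw [shape_sum]; omega)
    (gphi D l L) (gphi' D l L) hgo ?_ ?_ ?_ ?_ ?_).symm
  · intro p hp
    simp only [gphi']
    split_ifs <;> omega
  · intro p hp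
    simp only [gphi, gphi']
    split_ifs <;> omega
  · intro p hp
    simp only [gphi, gphi']
    split_ifs <;> omega
  · -- values
    intro p hp
    simp only [gphi]
    split_ifs with c1 c2 c3
    · exact el_phi_lo hL h2 (by omega)
    · rw [c2, el_phi_y hL h2]
    · rw [el_phi_mid hL h2 (by omega) (by omega), el_Z]
      congr 1
      omega
    · rw [el_phi_hi hL h2 (by omega), el_Z]
      congr 1
      omega
  · -- row order
    intro p q hp hq hinc
    rw [rg p hp, rg q hq, r2_eval h2 p hp, r2_eval h2 q hq]
    by_cases hpy : p = 3*l+1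
    · by_cases hqy : q = 3*l+1
      · subst hpy; subst hqy
        split_ifs <;> omega
      · by_cases hqM : 3*l+2 ≤ q ∧ q < 3*l+2 + jw D l L
        · exfalso
          have hpre := jw_prefix D l L (k := q - 3*l - 2) (by omega)
          rw [el_Z, show 3*l+2+(q-3*l-2) = q from by omega, ← hpy] at hpre
          exact hinc.2 hpre
        · subst hpy
          split_ifs <;> omega
    · by_cases hqy : q = 3*l+1
      · by_cases hpx : p = 3*l
        · exfalso
          have : D.prec (el L p) (el L q) := by
            rw [hpx, hqy]; exact hxy
          exact hinc.1 this
        · by_cases hpM : 3*l+2 ≤ p ∧ p < 3*l+2 + jw D l L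
          · exfalso
            have hpre := jw_prefix D l L (k := p - 3*l - 2) (by omega)
            rw [el_Z, show 3*l+2+(p-3*l-2) = p from by omega, ← hqy] at hpre
            exact hinc.1 hpre
          · subst hqy
            split_ifs <;> omega
      · split_ifs <;> omega

set_option maxHeartbeats 3200000 in
lemma inv_psi (h2 : 3*l+2 ≤ n) (hm : L ∈ D.ptabs (shape l 1 (n - 3*l - 2)))
    (hB : Bad D l L) :
    D.invNum (shape (l+1) 0 (n - 3*l - 3)) (psi D l L) =
      D.invNum (shape l 1 (n - 3*l - 2)) L := by
  obtain ⟨hperm, hsum, hr3, hv3, hxy, hjun, hjun2, hvs⟩ :=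
    (ptab2_iff D l (n - 3*l - 2) L).mp (mem_ptabs_iff.mp hm)
  have hL : L.length = n := withMem_length hperm
  have hz : (L.drop (3*l+2)).length = n - 3*l - 2 := length_Z hL
  have hii := (ii_spec hB).1
  have hj := jw_le D l L
  have hux := bad_ux h2 hm hB
  have huy := bad_uy h2 hm hB
  have hiin : 3*l + 2 + ii D l L < n := by omega
  have r3 : ∀ p, p < n → rowIdx (shape (l+1) 0 (n - 3*l - 3)) p =
      if p < 3*l+3 then p/3 else l + 1 + (p - 3*l - 3) := by
    intro p hp
    split_ifs with c1
    · exact rowIdx_shape_lo (by omega)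
    · rw [rowIdx_shape_hi (jj := 0) (by omega) (by omega)]
      omega
  have hgo : ∀ p, p < n → gpsi D l L p < n := by
    intro p hp
    simp only [gpsi]
    split_ifs <;> omega
  have rg : ∀ p, p < n → rowIdx (shape (l+1) 0 (n - 3*l - 3)) (gpsi D l L p) =
      if p < 3*l then p/3 else if p = 3*l then l else if p = 3*l+1 then l
      else if p = 3*l+2 + ii D l L then l
      else if p < 3*l+2 + ii D l L then l + (p - 3*l - 1) else l + (p - 3*l - 2) := by
    intro p hp
    rw [r3 _ (hgo p hp)]
    simp only [gpsi]
    split_ifs <;> omega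
  have hCu : ∀ k, k < ii D l L → D.prec (el L (3*l+2+k)) (uu D l L) := by
    intro k hk
    have := bad_C1 h2 hm hB hk
    rwa [el_Z] at this
  have huval : ∀ p, p = 3*l+2 + ii D l L → el L p = uu D l L := by
    intro p hpu
    rw [hpu]
    unfold uu
    rw [el_Z]
  rw [invNum_eq_posInv, invNum_eq_posInv]
  refine (posInv_eq_of_rearrange D (N := n) (by rw [shape_sum]; omega) (by rw [shape_sum]; omega)
    (gpsi D l L) (gpsi' D l L) hgo ?_ ?_ ?_ ?_ ?_).symm
  · intro p hp
    simp only [gpsi']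
    split_ifs <;> omega
  · intro p hp
    simp only [gpsi, gpsi']
    split_ifs <;> omega
  · intro p hp
    simp only [gpsi, gpsi']
    split_ifs <;> omega
  · -- values
    intro p hp
    simp only [gpsi]
    split_ifs with c1 c2 c3 c4
    · exact el_psi_lo hL h2 (by omega)
    · rw [c2, el_psi_yy hL h2]
    · rw [el_psi_u hL h2, c3]
      unfold uu
      rw [el_Z]
    · rw [el_psi_hi hL h2 (by omega)]
      rw [el_eraseIdx_lt (by omega), el_Z]
      congr 1
      omega
    · rw [el_psi_hi hL h2 (by omega)]
      rw [el_eraseIdx_ge (by omega) (by omega), el_Z]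
      congr 1
      omega
  · -- row order
    intro p q hp hq hinc
    rw [rg p hp, rg q hq, r2_eval h2 p hp, r2_eval h2 q hq]
    by_cases hpu : p = 3*l+2 + ii D l L
    · by_cases hqu : q = 3*l+2 + ii D l L
      · subst hpu
        rw [hqu]
        split_ifs <;> omega
      · by_cases hqx : q = 3*l
        · exfalso
          have : D.prec (el L q) (el L p) := by
            rw [hqx, huval p hpu]
            exact hux
          exact hinc.2 this
        · by_cases hqy : q = 3*l+1
          · exfalso
            have : D.prec (el L p) (el L q) := by
              rw [hqy, huval p hpu]
              exact huy
            exact hinc.1 this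
          · by_cases hqM : 3*l+2 ≤ q ∧ q < 3*l+2 + ii D l L
            · exfalso
              have hc := hCu (q - 3*l - 2) (by omega)
              rw [show 3*l+2+(q-3*l-2) = q from by omega, ← huval p hpu] at hc
              exact hinc.2 hc
            · subst hpu
              split_ifs <;> omega
    · by_cases hqu : q = 3*l+2 + ii D l L
      · by_cases hpx : p = 3*l
        · exfalso
          have : D.prec (el L p) (el L q) := by
            rw [hpx, huval q hqu]
            exact hux
          exact hinc.1 this
        · by_cases hpy : p = 3*l+1
          · exfalso
            have : D.prec (el L q) (el L p) := by
              rw [hpy, huval q hqu]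
              exact huy
            exact hinc.2 this
          · by_cases hpM : 3*l+2 ≤ p ∧ p < 3*l+2 + ii D l L
            · exfalso
              have hc := hCu (p - 3*l - 2) (by omega)
              rw [show 3*l+2+(p-3*l-2) = p from by omega, ← huval q hqu] at hc
              exact hinc.1 hc
            · subst hqu
              split_ifs <;> omega
      · split_ifs <;> omega

end EPos
namespace EPos

variable {n : ℕ}

lemma coeff_B (D : DyckPath n) (μ : List ℕ) (k : ℕ) :
    (D.B μ).coeff k = (((D.ptabs μ).filter (fun L => D.invNum μ L = k)).card : ℤ) := by
  unfold DyckPath.B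
  rw [Polynomial.finset_sum_coeff]
  rw [Finset.card_filter]
  push_cast
  congr 1
  ext L
  rw [Polynomial.coeff_X_pow]
  by_cases h : D.invNum μ L = k
  · rw [if_pos h, if_pos (by omega)]
  · rw [if_neg h, if_neg (by omega)]

lemma card_ineq (D : DyckPath n) (h3 : D.BounceThree) (l k : ℕ) :
    ((D.ptabs (shape l 1 (n - 3*l - 2))).filter
        (fun L => D.invNum (shape l 1 (n - 3*l - 2)) L = k)).card ≤
      ((D.ptabs (shape l 0 (n - 3*l))).filter
        (fun L => D.invNum (shape l 0 (n - 3*l)) L = k)).card +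
      ((D.ptabs (shape (l+1) 0 (n - 3*l - 3))).filter
        (fun L => D.invNum (shape (l+1) 0 (n - 3*l - 3)) L = k)).card := by
  by_cases h2 : 3*l+2 ≤ n
  · set s1 := (D.ptabs (shape l 0 (n - 3*l))).filter
      (fun L => D.invNum (shape l 0 (n - 3*l)) L = k) with hs1
    set s2 := (D.ptabs (shape l 1 (n - 3*l - 2))).filter
      (fun L => D.invNum (shape l 1 (n - 3*l - 2)) L = k) with hs2
    set s3 := (D.ptabs (shape (l+1) 0 (n - 3*l - 3))).filter
      (fun L => D.invNum (shape (l+1) 0 (n - 3*l - 3)) L = k) with hs3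
    have hcard : s2.card ≤ (s1.disjSum s3).card := by
      apply Finset.card_le_card_of_injOn
        (fun L => if Bad D l L then Sum.inr (psi D l L) else Sum.inl (phi D l L))
      · intro L hL
        simp only [Finset.mem_coe]
        rw [hs2, Finset.mem_coe, Finset.mem_filter] at hL
        obtain ⟨hmem, hinv⟩ := hL
        by_cases hB : Bad D l L
        · rw [if_pos hB]
          apply Finset.inr_mem_disjSum.mpr
          rw [hs3, Finset.mem_filter]
          exact ⟨psi_mem h3 h2 hmem hB, by rw [inv_psi h2 hmem hB]; exact hinv⟩
        · rw [if_neg hB]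
          apply Finset.inl_mem_disjSum.mpr
          rw [hs1, Finset.mem_filter]
          exact ⟨phi_mem h2 hmem, by rw [inv_phi h2 hmem]; exact hinv⟩
      · intro a ha b hb hab
        simp only [Finset.coe_filter, Set.mem_setOf_eq, hs2] at ha hb
        have hma : a ∈ D.ptabs (shape l 1 (n - 3*l - 2)) := ha.1
        have hmb : b ∈ D.ptabs (shape l 1 (n - 3*l - 2)) := hb.1
        by_cases hBa : Bad D l a <;> by_cases hBb : Bad D l b <;>
          simp only [if_pos, if_neg, hBa, hBb, if_true, if_false] at hab
        · exact bad_inj h2 hma hmb hBa hBb (Sum.inr.inj hab)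
        · exact absurd hab (by simp)
        · exact absurd hab (by simp)
        · exact good_inj h2 hma hmb hBa hBb (Sum.inl.inj hab)
    rw [Finset.card_disjSum] at hcard
    exact hcard
  · -- degenerate: no μ₂ tableaux at all
    have : (D.ptabs (shape l 1 (n - 3*l - 2))).filter
        (fun L => D.invNum (shape l 1 (n - 3*l - 2)) L = k) = ∅ := by
      rw [Finset.eq_empty_iff_forall_notMem]
      intro L hL
      have hmem := (Finset.mem_filter.mp hL).1
      have hpt := mem_ptabs_iff.mp hmem
      have hsum := hpt.2.1
      rw [shape_sum] at hsum
      omega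
    rw [this]
    simp

end EPos

/-- **Theorem `e_{(n-2l,l,l)}`.** For a Dyck path of bounce number three and
`0 ≤ l ≤ min {a,b,c}`, the coefficient of `e_{(n-2l,l,l)}`, namely
`B_{3^l 1^{n-3l}} - B_{3^l 2 1^{n-3l-2}} + B_{3^{l+1} 1^{n-3l-3}}`, lies in `ℕ[q]`. -/
theorem coeff_e_n_sub_2l_l_l_nonneg
    (n : ℕ) (D : DyckPath n) (h3 : D.BounceThree)
    (l : ℕ) (hl : l ≤ min (n - D.m1) (min (D.m1 - D.m0) D.m0)) :
    ∀ k : ℕ,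
      0 ≤ (D.B (shape l 0 (n - 3 * l)) - D.B (shape l 1 (n - 3 * l - 2))
            + D.B (shape (l + 1) 0 (n - 3 * l - 3))).coeff k := by
  intro k
  rw [Polynomial.coeff_add, Polynomial.coeff_sub]
  rw [EPos.coeff_B, EPos.coeff_B, EPos.coeff_B]
  have h := EPos.card_ineq D h3 l k
  push_cast
  omega
end

section
/- Let P = P(d) be the natural unit interval order on {1,…,n} of a Dyck path d with bounce number 3, and let 0 ≤ l ≤ min{a,b,c}. Then there exists an injective map f from the set of P-tableaux of shape 3^{l+1} 1^{n-3l-3} into the set of P-tableaux of shape 3^l 2^1 1^{n-3l-2}, such that inv(f(T)) = inv(T) for every T in the domain. -/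
open scoped Classical

/-!
In a `P`-tableau of shape `3^{l+1} 1^m`, the last row of length three is a chain `x ≺ y ≺ z`.
Bounce number three means that `P` has no chain of four elements, so `z` precedes nothing.
The map `f` takes `z` out of its row and puts it back into the first column, directly below the
initial run of column entries that are `≺ z`. This gives a `P`-tableau of shape `3^l 2 1^{m+1}`:
`z` is not `≺` the entry above it, and by the choice of the position the entry below it is not
`≺ z`. Every entry that changes rows relative to `z` (`x`, `y` and the run) is comparable with
`z`, and all other entries keep their relative row order, so the inversions are the same.
Finally `f` is injective: the run entries precede `z` and so are not maximal in `P`, while `z` is,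
so `z` is the first entry of the new column (below row `l`) that is maximal.
-/

theorem shape_length_s7 (a b c : ℕ) : (shape a b c).length = a + b + c := by
  simp [shape, Nat.add_assoc]

theorem shape_sum_s7 (a b c : ℕ) : (shape a b c).sum = 3 * a + 2 * b + c := by
  simp only [shape, List.sum_append, List.sum_replicate, smul_eq_mul]
  ring

theorem shape_getD (a b c i : ℕ) : (shape a b c).getD i 0 =
    if i < a then 3 else if i < a + b then 2 else if i < a + b + c then 1 else 0 := by
  grind [shape]

theorem rowStart_shape (a b c i : ℕ) :
    rowStart (shape a b c) i = 3 * min i a + 2 * min (i - a) b + min (i - a - b) c := by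
  simp only [rowStart, shape, List.take_append, List.take_replicate, List.length_replicate,
    List.length_append, List.sum_append, List.sum_replicate, smul_eq_mul]
  omega

theorem mem_cellsOf {μ : List ℕ} {c : ℕ × ℕ} :
    c ∈ cellsOf μ ↔ c.1 < μ.length ∧ c.2 < μ.getD c.1 0 := by
  simp only [cellsOf, Finset.mem_filter, Finset.mem_product, Finset.mem_range]
  refine ⟨fun h => ⟨h.1.1, h.2⟩, fun ⟨h1, h2⟩ => ⟨⟨h1, h2.trans_le ?_⟩, h2⟩⟩
  rw [List.getD_eq_getElem _ _ h1]
  exact List.le_max_of_le' 0 (List.getElem_mem h1) le_rfl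

theorem mem_cellsOf_shape {a b c : ℕ} {x : ℕ × ℕ} :
    x ∈ cellsOf (shape a b c) ↔
      x.1 < a ∧ x.2 < 3 ∨ a ≤ x.1 ∧ x.1 < a + b ∧ x.2 < 2 ∨
        a + b ≤ x.1 ∧ x.1 < a + b + c ∧ x.2 = 0 := by
  rw [mem_cellsOf, shape_length_s7, shape_getD]
  split_ifs <;> omega

theorem entry_shape_of_le {a b c i : ℕ} (L : List ℕ) (j : ℕ) (hi : i ≤ a) :
    entry (shape a b c) L i j = L.getD (3 * i + j) 0 := by
  rw [entry, rowStart_shape]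
  congr 1
  omega

theorem entry_shape_add {a b c t : ℕ} (L : List ℕ) (j : ℕ) (ht : t ≤ c) :
    entry (shape a b c) L (a + b + t) j = L.getD (3 * a + 2 * b + t + j) 0 := by
  rw [entry, rowStart_shape]
  congr 1
  omega

namespace List

variable {α : Type*}

theorem getD_mem_of_lt {l : List α} {i : ℕ} (d : α) (h : i < l.length) : l.getD i d ∈ l := by
  rw [getD_eq_getElem _ _ h]
  exact getElem_mem h

theorem getD_insertIdx {l : List α} {k : ℕ} (x d : α) (i : ℕ) (hk : k ≤ l.length) :
    (l.insertIdx k x).getD i d =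
      if i < k then l.getD i d else if i = k then x else l.getD (i - 1) d := by
  rw [getD_eq_getElem?_getD, getElem?_insertIdx]
  split_ifs <;> simp_all [getD_eq_getElem?_getD]

theorem rel_getD_insertIdx {r : α → α → Prop} {l : List α} {k : ℕ} {x d : α}
    (hk : k ≤ l.length) (hl : ∀ i, i + 1 < l.length → r (l.getD i d) (l.getD (i + 1) d))
    (hbefore : 0 < k → r (l.getD (k - 1) d) x) (hafter : k < l.length → r x (l.getD k d))
    {i : ℕ} (hi : i < l.length) :
    r ((l.insertIdx k x).getD i d) ((l.insertIdx k x).getD (i + 1) d) := by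
  rw [getD_insertIdx x d i hk, getD_insertIdx x d (i + 1) hk]
  rcases lt_trichotomy (i + 1) k with h | rfl | h
  · simpa [if_pos h, if_pos (show i < k by omega)] using hl i (by omega)
  · simpa using hbefore (by omega)
  · rcases eq_or_lt_of_le (show k ≤ i by omega) with rfl | h'
    · simpa using hafter (by omega)
    · obtain ⟨j, rfl⟩ : ∃ j, i = j + 1 := ⟨i - 1, by omega⟩
      simpa [if_neg (show ¬ j + 1 < k by omega), if_neg (show j + 1 ≠ k by omega),
        if_neg (show ¬ j + 1 + 1 < k by omega), if_neg (show j + 1 + 1 ≠ k by omega)]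
        using hl j (by omega)

end List

def slideCell (l k : ℕ) (c : ℕ × ℕ) : ℕ × ℕ :=
  if c = (l, 2) then (l + 1 + k, 0) else if c.1 ≤ l + k then c else (c.1 + 1, c.2)

def unslideCell (l k : ℕ) (c : ℕ × ℕ) : ℕ × ℕ :=
  if c = (l + 1 + k, 0) then (l, 2) else if c.1 ≤ l + k then c else (c.1 - 1, c.2)

theorem bijOn_slideCell {l k m : ℕ} (hk : k ≤ m) :
    Set.BijOn (slideCell l k) (cellsOf (shape (l + 1) 0 m)) (cellsOf (shape l 1 (m + 1))) := by
  refine Set.InvOn.bijOn (f' := unslideCell l k) ⟨?_, ?_⟩ ?_ ?_ <;>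
  · rintro ⟨i, j⟩ h
    simp only [Finset.mem_coe, mem_cellsOf_shape] at h ⊢
    simp only [slideCell, unslideCell, Prod.mk.injEq]
    split_ifs <;> simp_all <;> omega

section Entries

variable {l m k : ℕ} {A B : List ℕ} {z : ℕ}

theorem entry_append_cons_of_lt (hA : A.length = 3 * l + 2) {i j : ℕ}
    (h : 3 * i + j < 3 * l + 2) :
    entry (shape (l + 1) 0 m) (A ++ z :: B) i j = A.getD (3 * i + j) 0 := by
  rw [entry_shape_of_le _ _ (by omega), List.getD_append _ _ _ _ (by omega)]

theorem entry_append_cons_corner (hA : A.length = 3 * l + 2) :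
    entry (shape (l + 1) 0 m) (A ++ z :: B) l 2 = z := by
  rw [entry_shape_of_le _ _ (by omega), List.getD_append_right _ _ _ _ (by omega), hA,
    Nat.sub_self, List.getD_cons_zero]

theorem entry_append_cons_column (hA : A.length = 3 * l + 2) {t : ℕ} (ht : t ≤ m) :
    entry (shape (l + 1) 0 m) (A ++ z :: B) (l + 1 + t) 0 = B.getD t 0 := by
  rw [← Nat.add_zero (l + 1), entry_shape_add _ _ ht, List.getD_append_right _ _ _ _ (by omega),
    hA, show 3 * (l + 1) + 2 * 0 + t + 0 - (3 * l + 2) = t + 1 by omega, List.getD_cons_succ]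

theorem entry_append_of_lt (hA : A.length = 3 * l + 2) (C : List ℕ) {i j : ℕ}
    (h : 3 * i + j < 3 * l + 2) :
    entry (shape l 1 (m + 1)) (A ++ C) i j = A.getD (3 * i + j) 0 := by
  rw [entry_shape_of_le _ _ (by omega), List.getD_append _ _ _ _ (by omega)]

theorem entry_append_column (hA : A.length = 3 * l + 2) (C : List ℕ) {t : ℕ}
    (ht : t ≤ m + 1) :
    entry (shape l 1 (m + 1)) (A ++ C) (l + 1 + t) 0 = C.getD t 0 := by
  rw [entry_shape_add _ _ ht, List.getD_append_right _ _ _ _ (by omega), hA]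
  congr 1
  omega

theorem entry_slideCell (hA : A.length = 3 * l + 2) (hB : B.length = m) (hk : k ≤ m)
    {c : ℕ × ℕ} (hc : c ∈ cellsOf (shape (l + 1) 0 m)) :
    entry (shape l 1 (m + 1)) (A ++ B.insertIdx k z) (slideCell l k c).1 (slideCell l k c).2 =
      entry (shape (l + 1) 0 m) (A ++ z :: B) c.1 c.2 := by
  obtain ⟨i, j⟩ := c
  rw [mem_cellsOf_shape] at hc
  simp only [slideCell, Prod.mk.injEq]
  by_cases hcorner : i = l ∧ j = 2
  · obtain ⟨rfl, rfl⟩ := hcorner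
    rw [if_pos ⟨rfl, rfl⟩, entry_append_column hA _ (by omega), entry_append_cons_corner hA,
      List.getD_insertIdx _ _ _ (by omega)]
    simp
  rw [if_neg hcorner]
  by_cases htop : 3 * i + j < 3 * l + 2
  · rw [if_pos (by omega), entry_append_of_lt hA _ htop, entry_append_cons_of_lt hA htop]
  obtain ⟨t, rfl⟩ : ∃ t, i = l + 1 + t := ⟨i - (l + 1), by omega⟩
  obtain rfl : j = 0 := by omega
  rw [entry_append_cons_column hA (by omega)]
  split_ifs with ht
  · rw [entry_append_column hA _ (by omega), List.getD_insertIdx _ _ _ (by omega),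
      if_pos (by omega)]
  · rw [show l + 1 + t + 1 = l + 1 + (t + 1) by omega, entry_append_column hA _ (by omega),
      List.getD_insertIdx _ _ _ (by omega), if_neg (by omega), if_neg (by omega)]
    rfl

end Entries

namespace DyckPath

variable {n : ℕ} {D : DyckPath n}

theorem prec_trans {x y z : ℕ} (hxy : D.prec x y) (hyz : D.prec y z) : D.prec x z := by
  have := D.ge_self y (by have := hxy.2; omega) hyz.1.le
  exact ⟨hxy.1, by have := hxy.2; have := hyz.2; omega⟩

/-- This is where bounce number three enters: a `≺`-chain has at most three elements. -/
theorem not_prec_of_prec_of_prec (hb : D.bounce 2 = n) {x y z w : ℕ} (hx : 1 ≤ x)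
    (hxy : D.prec x y) (hyz : D.prec y z) (hw : w ≤ n) : ¬ D.prec z w := by
  rintro ⟨hz, hzw⟩
  obtain ⟨hxn, hxy⟩ := hxy
  obtain ⟨hyn, hyz⟩ := hyz
  have h0 : D.bounce 0 < y := (D.mono 1 x le_rfl hx hxn.le).trans_lt hxy
  have h1 : D.bounce 1 < z := (D.mono _ y (by omega) h0 hyn.le).trans_lt hyz
  have h2 : D.bounce 2 ≤ D.d z := D.mono _ z (by omega) h1 hz.le
  omega

theorem IsPTab.length_eq {μ L : List ℕ} (hT : D.IsPTab μ L) : L.length = n := by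
  simpa using hT.1.length_eq

theorem IsPTab.mem_bounds {μ L : List ℕ} (hT : D.IsPTab μ L) {x : ℕ} (hx : x ∈ L) :
    1 ≤ x ∧ x ≤ n := by
  obtain ⟨a, ha, rfl⟩ := List.mem_map.1 (hT.1.mem_iff.1 hx)
  simp only [List.mem_range] at ha
  omega

theorem invNum_eq_of_bijOn {μ ν L L' : List ℕ} {φ : ℕ × ℕ → ℕ × ℕ}
    (hφ : Set.BijOn φ (cellsOf μ) (cellsOf ν))
    (hentry : ∀ c ∈ cellsOf μ, entry ν L' (φ c).1 (φ c).2 = entry μ L c.1 c.2)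
    (hrow : ∀ c ∈ cellsOf μ, ∀ c' ∈ cellsOf μ,
      D.Incomp (entry μ L c.1 c.2) (entry μ L c'.1 c'.2) →
        ((φ c).1 < (φ c').1 ↔ c.1 < c'.1)) :
    D.invNum ν L' = D.invNum μ L := by
  refine (Finset.card_nbij (Prod.map φ φ) ?_ ?_ ?_).symm
  · rintro ⟨c, c'⟩ h
    simp only [Finset.coe_filter, Finset.mem_product, Set.mem_ofPred_eq] at h ⊢
    obtain ⟨⟨hc, hc'⟩, hlt, hval, hinc⟩ := h
    simp only [Prod.map_fst, Prod.map_snd, hentry c hc, hentry c' hc']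
    exact ⟨⟨hφ.mapsTo hc, hφ.mapsTo hc'⟩, (hrow c hc c' hc' hinc).2 hlt, hval, hinc⟩
  · rintro ⟨c, c'⟩ h ⟨e, e'⟩ h' heq
    simp only [Finset.coe_filter, Finset.mem_product, Set.mem_ofPred_eq] at h h'
    simp only [Prod.map, Prod.mk.injEq] at heq
    rw [hφ.injOn h.1.1 h'.1.1 heq.1, hφ.injOn h.1.2 h'.1.2 heq.2]
  · rintro ⟨e, e'⟩ h
    simp only [Finset.coe_filter, Finset.mem_product, Set.mem_ofPred_eq] at h
    obtain ⟨⟨he, he'⟩, hlt, hval, hinc⟩ := h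
    obtain ⟨c, hc, rfl⟩ := hφ.surjOn he
    obtain ⟨c', hc', rfl⟩ := hφ.surjOn he'
    rw [hentry c hc, hentry c' hc'] at hval hinc
    refine ⟨(c, c'), ?_, rfl⟩
    simp only [Finset.coe_filter, Finset.mem_product, Set.mem_ofPred_eq]
    exact ⟨⟨hc, hc'⟩, (hrow c hc c' hc' hinc).1 hlt, hval, hinc⟩

noncomputable def slidePos (D : DyckPath n) (z : ℕ) (B : List ℕ) : ℕ :=
  B.findIdx fun b => !decide (D.prec b z)

/-- The map `f` on reading words of shape `3^{l+1} 1^m`: position `3 * l + 2` holds the corner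
`z`, the last entry of row `l` (rows counted from `0`), and `L.drop (3 * l + 3)` is the first
column below it. -/
noncomputable def slideCorner (D : DyckPath n) (l : ℕ) (L : List ℕ) : List ℕ :=
  L.take (3 * l + 2) ++
    (L.drop (3 * l + 3)).insertIdx (D.slidePos (L.getD (3 * l + 2) 0) (L.drop (3 * l + 3)))
      (L.getD (3 * l + 2) 0)

theorem slidePos_le (z : ℕ) (B : List ℕ) : D.slidePos z B ≤ B.length :=
  List.findIdx_le_length

theorem prec_of_lt_slidePos {z : ℕ} {B : List ℕ} {t : ℕ} (ht : t < D.slidePos z B) :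
    D.prec (B.getD t 0) z := by
  rw [List.getD_eq_getElem _ _ (ht.trans_le (slidePos_le z B))]
  simpa using List.not_of_lt_findIdx ht

theorem not_prec_getD_slidePos {z : ℕ} {B : List ℕ} (h : D.slidePos z B < B.length) :
    ¬ D.prec (B.getD (D.slidePos z B) 0) z := by
  rw [List.getD_eq_getElem _ _ h]
  have := List.findIdx_getElem (w := h)
  simp only [Bool.not_eq_eq_eq_not, Bool.not_true, decide_eq_false_iff_not] at this
  exact this

theorem slideCorner_append_cons {l z : ℕ} {A B : List ℕ} (hA : A.length = 3 * l + 2) :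
    D.slideCorner l (A ++ z :: B) = A ++ B.insertIdx (D.slidePos z B) z := by
  have hz : (A ++ z :: B).getD (3 * l + 2) 0 = z := by
    rw [List.getD_append_right _ _ _ _ (by omega), hA, Nat.sub_self, List.getD_cons_zero]
  have hB : (A ++ z :: B).drop (3 * l + 3) = B := by
    rw [List.drop_append, hA, List.drop_of_length_le (by omega),
      show 3 * l + 3 - (3 * l + 2) = 1 by omega]
    rfl
  rw [slideCorner, hz, hB, List.take_append_of_le_length (by omega),
    List.take_of_length_le (by omega)]

variable {l m : ℕ}

namespace IsPTab

section Decomposed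

variable {A B A' B' : List ℕ} {z z' : ℕ}

theorem length_column (hA : A.length = 3 * l + 2)
    (hT : D.IsPTab (shape (l + 1) 0 m) (A ++ z :: B)) : B.length = m := by
  have hlen := hT.length_eq
  have hsum := hT.2.1
  rw [shape_sum_s7] at hsum
  simp only [List.length_append, List.length_cons] at hlen
  omega

theorem prec_last_row (hA : A.length = 3 * l + 2)
    (hT : D.IsPTab (shape (l + 1) 0 m) (A ++ z :: B)) :
    D.prec (A.getD (3 * l) 0) (A.getD (3 * l + 1) 0) ∧ D.prec (A.getD (3 * l + 1) 0) z := by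
  have hrow : ∀ j, j < 2 →
      D.prec (entry (shape (l + 1) 0 m) (A ++ z :: B) l j)
        (entry (shape (l + 1) 0 m) (A ++ z :: B) l (j + 1)) := fun j hj =>
    hT.2.2.1 l j (by rw [shape_length_s7]; omega) (by rw [shape_getD]; split_ifs <;> omega)
  have h0 := hrow 0 (by omega)
  have h1 := hrow 1 (by omega)
  rw [entry_append_cons_of_lt hA (by omega), entry_append_cons_of_lt hA (by omega)] at h0
  rw [entry_append_cons_of_lt hA (by omega), entry_append_cons_corner hA] at h1
  exact ⟨h0, h1⟩

theorem prec_corner (hA : A.length = 3 * l + 2)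
    (hT : D.IsPTab (shape (l + 1) 0 m) (A ++ z :: B)) {j : ℕ} (hj : j < 2) :
    D.prec (A.getD (3 * l + j) 0) z := by
  obtain ⟨hxy, hyz⟩ := hT.prec_last_row hA
  interval_cases j
  · exact prec_trans hxy hyz
  · exact hyz

theorem not_prec_corner (hb : D.bounce 2 = n) (hA : A.length = 3 * l + 2)
    (hT : D.IsPTab (shape (l + 1) 0 m) (A ++ z :: B)) {w : ℕ} (hw : w ≤ n) :
    ¬ D.prec z w := by
  obtain ⟨hxy, hyz⟩ := hT.prec_last_row hA
  have hx := hT.mem_bounds (List.mem_append_left _ (List.getD_mem_of_lt (i := 3 * l) 0 (by omega)))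
  exact not_prec_of_prec_of_prec hb hx.1 hxy hyz hw

theorem not_prec_slide_column (hb : D.bounce 2 = n) (hA : A.length = 3 * l + 2)
    (hT : D.IsPTab (shape (l + 1) 0 m) (A ++ z :: B)) {s : ℕ} (hs : s ≤ m) :
    ¬ D.prec (entry (shape l 1 (m + 1)) (A ++ B.insertIdx (D.slidePos z B) z) (l + s + 1) 0)
      (entry (shape l 1 (m + 1)) (A ++ B.insertIdx (D.slidePos z B) z) (l + s) 0) := by
  set k := D.slidePos z B
  set x := A.getD (3 * l) 0
  have hB := hT.length_column hA
  have hk : k ≤ B.length := slidePos_le z B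
  have hold : ∀ i ≤ m,
      entry (shape (l + 1) 0 m) (A ++ z :: B) (l + i) 0 = (x :: B).getD i 0 := by
    rintro (_ | i) hi
    · exact entry_append_cons_of_lt hA (by omega)
    · rw [List.getD_cons_succ,
        ← entry_append_cons_column hA (m := m) (z := z) (t := i) (by omega)]
      congr 1
      omega
  have hnew : ∀ i ≤ m + 1, entry (shape l 1 (m + 1)) (A ++ B.insertIdx k z) (l + i) 0 =
      ((x :: B).insertIdx (k + 1) z).getD i 0 := by
    rintro (_ | i) hi
    · exact entry_append_of_lt hA _ (by omega)
    · rw [List.insertIdx_succ_cons, List.getD_cons_succ,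
        ← entry_append_column hA (m := m) _ (t := i) (by omega)]
      congr 1
      omega
  have hnext := hnew (s + 1) (by omega)
  rw [← Nat.add_assoc] at hnext
  rw [hnext, hnew s (by omega)]
  refine List.rel_getD_insertIdx (r := fun a b => ¬ D.prec b a)
    (by rw [List.length_cons]; omega) ?_ ?_ ?_ (by rw [List.length_cons]; omega)
  · intro i hi
    rw [List.length_cons] at hi
    have := hT.2.2.2 (l + i) 0 (by rw [shape_length_s7]; omega)
      (by rw [shape_getD]; split_ifs <;> omega)
    rwa [Nat.add_assoc, hold i (by omega), hold (i + 1) (by omega)] at this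
  · intro _
    refine hT.not_prec_corner hb hA (hT.mem_bounds ?_).2
    rcases k with _ | k
    · exact List.mem_append_left _ (List.getD_mem_of_lt 0 (by omega))
    · exact List.mem_append_right _ (List.mem_cons_of_mem _ (List.getD_mem_of_lt 0 (by omega)))
  · intro hk'
    rw [List.length_cons] at hk'
    exact not_prec_getD_slidePos (by omega)

theorem slide (hb : D.bounce 2 = n) (hA : A.length = 3 * l + 2)
    (hT : D.IsPTab (shape (l + 1) 0 m) (A ++ z :: B)) :
    D.IsPTab (shape l 1 (m + 1)) (A ++ B.insertIdx (D.slidePos z B) z) := by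
  have hsum := hT.2.1
  rw [shape_sum_s7] at hsum
  refine ⟨((List.perm_insertIdx z B (slidePos_le z B)).append_left A).trans hT.1,
    by rw [shape_sum_s7]; omega, ?_, ?_⟩
  · intro i j hi hj
    rw [shape_length_s7] at hi
    rw [shape_getD] at hj
    have hij : 3 * i + (j + 1) < 3 * l + 2 := by split_ifs at hj <;> omega
    have := hT.2.2.1 i j (by rw [shape_length_s7]; omega)
      (by rw [shape_getD]; split_ifs at hj ⊢ <;> omega)
    rwa [entry_append_cons_of_lt hA (by omega), entry_append_cons_of_lt hA hij,
      ← entry_append_of_lt hA _ (by omega), ← entry_append_of_lt hA _ hij] at this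
  · intro i j hi hj
    rw [shape_length_s7] at hi
    rw [shape_getD] at hj
    by_cases hil : i + 1 ≤ l
    · have hij : 3 * (i + 1) + j < 3 * l + 2 := by split_ifs at hj <;> omega
      have := hT.2.2.2 i j (by rw [shape_length_s7]; omega)
        (by rw [shape_getD]; split_ifs at hj ⊢ <;> omega)
      rwa [entry_append_cons_of_lt hA hij, entry_append_cons_of_lt hA (by omega),
        ← entry_append_of_lt hA _ hij, ← entry_append_of_lt hA _ (by omega)] at this
    · obtain ⟨s, rfl⟩ : ∃ s, i = l + s := ⟨i - l, by omega⟩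
      obtain rfl : j = 0 := by split_ifs at hj <;> omega
      exact hT.not_prec_slide_column hb hA (by omega)

theorem prec_corner_of_mem (hA : A.length = 3 * l + 2)
    (hT : D.IsPTab (shape (l + 1) 0 m) (A ++ z :: B)) {c : ℕ × ℕ}
    (hc : c ∈ cellsOf (shape (l + 1) 0 m)) (hne : c ≠ (l, 2)) (hl : l ≤ c.1)
    (hk : c.1 ≤ l + D.slidePos z B) :
    D.prec (entry (shape (l + 1) 0 m) (A ++ z :: B) c.1 c.2) z := by
  obtain ⟨i, j⟩ := c
  rw [mem_cellsOf_shape] at hc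
  simp only [ne_eq, Prod.mk.injEq] at hne hl hk ⊢
  by_cases hi : i = l
  · subst hi
    rw [entry_append_cons_of_lt hA (by omega)]
    exact hT.prec_corner hA (by omega)
  · obtain ⟨t, rfl⟩ : ∃ t, i = l + 1 + t := ⟨i - (l + 1), by omega⟩
    obtain rfl : j = 0 := by omega
    rw [entry_append_cons_column hA (by omega)]
    exact prec_of_lt_slidePos (by omega)

theorem slideCell_fst_lt_iff (hA : A.length = 3 * l + 2)
    (hT : D.IsPTab (shape (l + 1) 0 m) (A ++ z :: B)) {c c' : ℕ × ℕ}
    (hc : c ∈ cellsOf (shape (l + 1) 0 m)) (hc' : c' ∈ cellsOf (shape (l + 1) 0 m))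
    (hinc : D.Incomp (entry (shape (l + 1) 0 m) (A ++ z :: B) c.1 c.2)
      (entry (shape (l + 1) 0 m) (A ++ z :: B) c'.1 c'.2)) :
    (slideCell l (D.slidePos z B) c).1 < (slideCell l (D.slidePos z B) c').1 ↔ c.1 < c'.1 := by
  have hfar : ∀ c₁ ∈ cellsOf (shape (l + 1) 0 m), c₁ ≠ (l, 2) →
      ¬ D.prec (entry (shape (l + 1) 0 m) (A ++ z :: B) c₁.1 c₁.2) z →
      c₁.1 < l ∨ l + D.slidePos z B < c₁.1 := fun c₁ hc₁ hne hnot => by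
    by_contra! h
    exact hnot (hT.prec_corner_of_mem hA hc₁ hne h.1 h.2)
  unfold slideCell
  by_cases h : c = (l, 2) <;> by_cases h' : c' = (l, 2)
  · simp only [h, h', lt_self_iff_false]
  · simp only [h, entry_append_cons_corner hA] at hinc
    have := hfar c' hc' h' hinc.2
    simp only [h, if_true, if_neg h']
    split_ifs <;> omega
  · simp only [h', entry_append_cons_corner hA] at hinc
    have := hfar c hc h hinc.1
    simp only [h', if_true, if_neg h]
    split_ifs <;> omega
  · simp only [if_neg h, if_neg h']
    split_ifs <;> omega

theorem invNum_slide (hA : A.length = 3 * l + 2)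
    (hT : D.IsPTab (shape (l + 1) 0 m) (A ++ z :: B)) :
    D.invNum (shape l 1 (m + 1)) (A ++ B.insertIdx (D.slidePos z B) z) =
      D.invNum (shape (l + 1) 0 m) (A ++ z :: B) := by
  have hB := hT.length_column hA
  have hk : D.slidePos z B ≤ m := hB ▸ slidePos_le z B
  exact invNum_eq_of_bijOn (bijOn_slideCell hk) (fun c hc => entry_slideCell hA hB hk hc)
    (fun c hc c' hc' hinc => hT.slideCell_fst_lt_iff hA hc hc' hinc)

/-- If `slidePos z' B' < slidePos z B`, then at index `slidePos z' B'` the common column holds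
both `z'` and an entry `≺ z`, contradicting the maximality of `z'`. -/
theorem slidePos_le_of_insertIdx_eq (hb : D.bounce 2 = n) (hA' : A'.length = 3 * l + 2)
    (hT' : D.IsPTab (shape (l + 1) 0 m) (A' ++ z' :: B')) (hz : z ≤ n)
    (h : B.insertIdx (D.slidePos z B) z = B'.insertIdx (D.slidePos z' B') z') :
    D.slidePos z B ≤ D.slidePos z' B' := by
  by_contra! hlt
  have hget := congrArg (List.getD · (D.slidePos z' B') 0) h
  simp only [List.getD_insertIdx _ _ _ (slidePos_le z B),
    List.getD_insertIdx _ _ _ (slidePos_le z' B'), if_pos hlt, lt_self_iff_false,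
    if_false, if_true] at hget
  exact hT'.not_prec_corner hb hA' hz (hget ▸ prec_of_lt_slidePos hlt)

theorem eq_of_slide_eq (hb : D.bounce 2 = n) (hA : A.length = 3 * l + 2)
    (hA' : A'.length = 3 * l + 2) (hT : D.IsPTab (shape (l + 1) 0 m) (A ++ z :: B))
    (hT' : D.IsPTab (shape (l + 1) 0 m) (A' ++ z' :: B'))
    (h : A ++ B.insertIdx (D.slidePos z B) z = A' ++ B'.insertIdx (D.slidePos z' B') z') :
    A ++ z :: B = A' ++ z' :: B' := by
  obtain ⟨rfl, hC⟩ := List.append_inj h (hA.trans hA'.symm)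
  have hk : D.slidePos z B = D.slidePos z' B' :=
    le_antisymm (hT'.slidePos_le_of_insertIdx_eq hb hA' (hT.mem_bounds (by simp)).2 hC)
      (hT.slidePos_le_of_insertIdx_eq hb hA (hT'.mem_bounds (by simp)).2 hC.symm)
  rw [hk] at hC
  have hz : z = z' := by
    have hget := congrArg (List.getD · (D.slidePos z' B') 0) hC
    simp only [List.getD_insertIdx _ _ _ (hk ▸ slidePos_le z B),
      List.getD_insertIdx _ _ _ (slidePos_le z' B'), lt_self_iff_false, if_false,
      if_true] at hget
    exact hget
  subst hz
  rw [← List.eraseIdx_insertIdx_self (i := D.slidePos z B') (l := B) z, hC,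
    List.eraseIdx_insertIdx_self]

end Decomposed

variable {L L' : List ℕ}

theorem exists_eq_append_cons (hT : D.IsPTab (shape (l + 1) 0 m) L) :
    ∃ A z B, A.length = 3 * l + 2 ∧ L = A ++ z :: B := by
  have hlen : 3 * l + 2 < L.length := by
    have := hT.2.1
    rw [shape_sum_s7] at this
    rw [hT.length_eq]
    omega
  refine ⟨L.take (3 * l + 2), L[3 * l + 2], L.drop (3 * l + 3),
    by rw [List.length_take]; omega, ?_⟩
  rw [← List.drop_eq_getElem_cons hlen, List.take_append_drop]

theorem slideCorner (hb : D.bounce 2 = n) (hT : D.IsPTab (shape (l + 1) 0 m) L) :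
    D.IsPTab (shape l 1 (m + 1)) (D.slideCorner l L) := by
  obtain ⟨A, z, B, hA, rfl⟩ := hT.exists_eq_append_cons
  rw [slideCorner_append_cons hA]
  exact hT.slide hb hA

theorem invNum_slideCorner (hT : D.IsPTab (shape (l + 1) 0 m) L) :
    D.invNum (shape l 1 (m + 1)) (D.slideCorner l L) = D.invNum (shape (l + 1) 0 m) L := by
  obtain ⟨A, z, B, hA, rfl⟩ := hT.exists_eq_append_cons
  rw [slideCorner_append_cons hA]
  exact hT.invNum_slide hA

theorem eq_of_slideCorner_eq (hb : D.bounce 2 = n) (hT : D.IsPTab (shape (l + 1) 0 m) L)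
    (hT' : D.IsPTab (shape (l + 1) 0 m) L') (h : D.slideCorner l L = D.slideCorner l L') :
    L = L' := by
  obtain ⟨A, z, B, hA, rfl⟩ := hT.exists_eq_append_cons
  obtain ⟨A', z', B', hA', rfl⟩ := hT'.exists_eq_append_cons
  rw [slideCorner_append_cons hA, slideCorner_append_cons hA'] at h
  exact hT.eq_of_slide_eq hb hA hA' hT' h

end IsPTab

end DyckPath

theorem exists_injection_f_general
    (n : ℕ) (D : DyckPath n) (h3 : D.BounceThree)
    (l : ℕ) :
    ∃ f : {L : List ℕ // D.IsPTab (shape (l + 1) 0 (n - 3 * l - 3)) L} →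
        {L : List ℕ // D.IsPTab (shape l 1 (n - 3 * l - 2)) L},
      Function.Injective f ∧
      ∀ T, D.invNum (shape l 1 (n - 3 * l - 2)) (f T).1
        = D.invNum (shape (l + 1) 0 (n - 3 * l - 3)) T.1 := by
  rcases lt_or_ge n (3 * l + 3) with hn | hn
  · have : IsEmpty {L : List ℕ // D.IsPTab (shape (l + 1) 0 (n - 3 * l - 3)) L} :=
      ⟨fun T => by have := T.2.2.1; rw [shape_sum_s7] at this; omega⟩
    exact ⟨isEmptyElim, fun T => isEmptyElim T, isEmptyElim⟩
  obtain ⟨m, rfl⟩ := Nat.exists_eq_add_of_le hn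
  rw [show 3 * l + 3 + m - 3 * l - 3 = m by omega, show 3 * l + 3 + m - 3 * l - 2 = m + 1 by omega]
  exact ⟨fun T => ⟨D.slideCorner l T, T.2.slideCorner h3.2.2⟩,
    fun T T' h => Subtype.ext (T.2.eq_of_slideCorner_eq h3.2.2 T'.2 (congrArg Subtype.val h)),
    fun T => T.2.invNum_slideCorner⟩

/-- The inversion-preserving injection `f` from `P`-tableaux of shape
`3^{l+1} 1^{n-3l-3}` into those of shape `3^l 2 1^{n-3l-2}`. -/
theorem exists_injection_f
    (n : ℕ) (D : DyckPath n) (h3 : D.BounceThree)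
    (l : ℕ) (hl : l ≤ min (n - D.m1) (min (D.m1 - D.m0) D.m0)) :
    ∃ f : {L : List ℕ // D.IsPTab (shape (l + 1) 0 (n - 3 * l - 3)) L} →
        {L : List ℕ // D.IsPTab (shape l 1 (n - 3 * l - 2)) L},
      Function.Injective f ∧
      ∀ T, D.invNum (shape l 1 (n - 3 * l - 2)) (f T).1
        = D.invNum (shape (l + 1) 0 (n - 3 * l - 3)) T.1 :=
  exists_injection_f_general n D h3 l
end

section
/- Let d be a Dyck path on an n×n board (n ≥ 5) of the form (d_1, d_2, n−1, …, n−1, n, …, n) (i.e., d_i ∈ {n−1, n} for all i ≥ 3) with bounce number 3, let P = P(d), and let T be a P-tableau of shape (3,2,1,…,1) = 3^1 2^1 1^{n-5} with entries a_{i,j} (row i, column j). If a_{1,3} = n, then a_{1,1} ∈ {1,2} and a_{2,1} ∈ {1,2}. If a_{1,3} ≠ n, then S_1 = {1}, a_{1,1} = 1, a_{1,2} = 2, and a_{2,2} = n. -/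
open scoped Classical

/-- **Lemma 4.2(b).** For a Dyck path `d = (d₁, d₂, n-1, …, n-1, n, …, n)`
of bounce number three and a `P`-tableau `T` of shape `3 2 1^{n-5}` (entries 1-indexed in the
paper, 0-indexed here): if `a_{1,3} = n` then `a_{1,1}, a_{2,1} ∈ {1,2}`; if `a_{1,3} ≠ n`
then `S₁ = {1}`, `a_{1,1} = 1`, `a_{1,2} = 2` and `a_{2,2} = n`. -/
theorem shape321_entries
    (n : ℕ) (D : DyckPath n) (hn : 5 ≤ n)
    (hform : ∀ i : ℕ, 3 ≤ i → i < n → D.d i = n - 1 ∨ D.d i = n)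
    (h3 : D.BounceThree)
    (L : List ℕ) (hT : D.IsPTab (shape 1 1 (n - 5)) L) :
    (entry (shape 1 1 (n - 5)) L 0 2 = n →
      (entry (shape 1 1 (n - 5)) L 0 0 = 1 ∨ entry (shape 1 1 (n - 5)) L 0 0 = 2) ∧
      (entry (shape 1 1 (n - 5)) L 1 0 = 1 ∨ entry (shape 1 1 (n - 5)) L 1 0 = 2)) ∧
    (entry (shape 1 1 (n - 5)) L 0 2 ≠ n →
      D.m0 = 1 ∧ entry (shape 1 1 (n - 5)) L 0 0 = 1 ∧
      entry (shape 1 1 (n - 5)) L 0 1 = 2 ∧ entry (shape 1 1 (n - 5)) L 1 1 = n) := by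

  obtain ⟨hperm, hsum, hrow, hcol⟩ := hT
  have hlen : L.length = n := by simpa using hperm.length_eq
  have hμeq : shape 1 1 (n - 5) = 3 :: 2 :: List.replicate (n - 5) 1 := by
    simp [shape]
  have hμlen : (shape 1 1 (n - 5)).length = n - 3 := by
    rw [hμeq]; simp; omega
  have hnodup : L.Nodup := by
    refine hperm.nodup_iff.mpr ?_
    exact (List.nodup_range : (List.range n).Nodup).map (fun a b h => by omega)
  have hmem : ∀ k, k < n → 1 ≤ L.getD k 0 ∧ L.getD k 0 ≤ n := by
    intro k hk
    have hk' : k < L.length := by omega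
    have hm : L.getD k 0 ∈ L := by
      rw [List.getD_eq_getElem _ _ hk']; exact List.getElem_mem _
    have := hperm.mem_iff.mp hm
    simp only [List.mem_map, List.mem_range] at this
    obtain ⟨a, ha, ha'⟩ := this
    omega
  have hne : ∀ k k', k < n → k' < n → k ≠ k' → L.getD k 0 ≠ L.getD k' 0 := by
    intro k k' hk hk' hkk h
    have h1 : k < L.length := by omega
    have h2 : k' < L.length := by omega
    rw [List.getD_eq_getElem _ _ h1, List.getD_eq_getElem _ _ h2] at h
    exact hkk ((List.Nodup.getElem_inj_iff hnodup).mp h)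
  have e00 : entry (shape 1 1 (n - 5)) L 0 0 = L.getD 0 0 := by
    simp [entry, rowStart]
  have e01 : entry (shape 1 1 (n - 5)) L 0 1 = L.getD 1 0 := by
    simp [entry, rowStart]
  have e02 : entry (shape 1 1 (n - 5)) L 0 2 = L.getD 2 0 := by
    simp [entry, rowStart]
  have e10 : entry (shape 1 1 (n - 5)) L 1 0 = L.getD 3 0 := by
    simp [entry, rowStart, hμeq]
  have e11 : entry (shape 1 1 (n - 5)) L 1 1 = L.getD 4 0 := by
    simp [entry, rowStart, hμeq]
  have hr1 : D.prec (L.getD 0 0) (L.getD 1 0) := by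
    have := hrow 0 0 (by omega) (by rw [hμeq]; simp)
    rwa [e00, e01] at this
  have hr2 : D.prec (L.getD 1 0) (L.getD 2 0) := by
    have := hrow 0 1 (by omega) (by rw [hμeq]; simp)
    rwa [e01, e02] at this
  have hr3 : D.prec (L.getD 3 0) (L.getD 4 0) := by
    have := hrow 1 0 (by omega) (by rw [hμeq]; simp)
    rwa [e10, e11] at this
  have hsmall : ∀ x y : ℕ, D.prec x y → y ≤ n - 1 → x ≤ 2 := by
    intro x y ⟨hxn, hd⟩ hy
    by_contra h
    have := hform x (by omega) hxn
    omega
  rw [e00, e01, e02, e10, e11]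
  constructor
  · intro h02
    have hm0 := hmem 0 (by omega)
    have hm1 := hmem 1 (by omega)
    have hm3 := hmem 3 (by omega)
    have hm4 := hmem 4 (by omega)
    have hn12 := hne 1 2 (by omega) (by omega) (by omega)
    have hn42 := hne 4 2 (by omega) (by omega) (by omega)
    have h1 : L.getD 0 0 ≤ 2 := hsmall _ _ hr1 (by omega)
    have h2 : L.getD 3 0 ≤ 2 := hsmall _ _ hr3 (by omega)
    omega
  · intro h02
    have hm0 := hmem 0 (by omega)
    have hm1 := hmem 1 (by omega)
    have hm2 := hmem 2 (by omega)
    have hm3 := hmem 3 (by omega)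
    have hm4 := hmem 4 (by omega)
    have h1 : L.getD 1 0 ≤ 2 := hsmall _ _ hr2 (by omega)
    obtain ⟨hx, hd1⟩ := hr1
    have hge : L.getD 0 0 ≤ D.d (L.getD 0 0) := D.ge_self _ (by omega) (by omega)
    have h00 : L.getD 0 0 = 1 := by omega
    have hn10 := hne 1 0 (by omega) (by omega) (by omega)
    have h01 : L.getD 1 0 = 2 := by omega
    have hd1' : D.d 1 = 1 := by
      rw [h00] at hd1 hge; omega
    have hm0' : D.m0 = 1 := by
      show D.bounce 0 = 1
      simpa [DyckPath.bounce] using hd1'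
    refine ⟨hm0', h00, h01, ?_⟩
    by_contra h11
    have h2 : L.getD 3 0 ≤ 2 := hsmall _ _ hr3 (by omega)
    have hn30 := hne 3 0 (by omega) (by omega) (by omega)
    have hn31 := hne 3 1 (by omega) (by omega) (by omega)
    omega
end
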